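/- arXiv:2403.19197 — 7 statements merged into one kernel-verified Lean document; each statement's English description precedes it below -/
import Mathlib

section
/- Let P be a preference profile over n unit tasks with v voters, let S be any EMD schedule for P, and let S' be any schedule. Then for every y ∈ {1,…,n}, k_y(S,P) ≤ 2·k_y(S',P), where k_y(S,P) is the number of pairs (voter i, task j) with C_j(V_i) ≤ y and C_j(S) > y. -/
open Finset

/-- Completion time of task `j` in schedule `S` (a value in `{1,…,n}`). -/
def Ctime {n : ℕ} (S : Equiv.Perm (Fin n)) (j : Fin n) : ℕ := (S j : ℕ) + 1

/-- Total tardiness `T(S,P) = Σ_i Σ_j max(0, C_j(S) − C_j(V_i))`. -/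
def totalTardiness {n v : ℕ} (S : Equiv.Perm (Fin n)) (P : Fin v → Equiv.Perm (Fin n)) : ℕ :=
  ∑ i : Fin v, ∑ j : Fin n, (Ctime S j - Ctime (P i) j)

/-- Total earliness `E(S,P) = Σ_i Σ_j max(0, C_j(V_i) − C_j(S))`. -/
def totalEarliness {n v : ℕ} (S : Equiv.Perm (Fin n)) (P : Fin v → Equiv.Perm (Fin n)) : ℕ :=
  ∑ i : Fin v, ∑ j : Fin n, (Ctime (P i) j - Ctime S j)

/-- Total deviation `Dev(S,P) = Σ_i Σ_j |C_j(S) − C_j(V_i)|`. -/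
def totalDeviation {n v : ℕ} (S : Equiv.Perm (Fin n)) (P : Fin v → Equiv.Perm (Fin n)) : ℕ :=
  ∑ i : Fin v, ∑ j : Fin n, Nat.dist (Ctime S j) (Ctime (P i) j)

/-- Total number of late tasks `U(S,P) = Σ_i |{ j : C_j(S) > C_j(V_i) }|`. -/
def lateCount {n v : ℕ} (S : Equiv.Perm (Fin n)) (P : Fin v → Equiv.Perm (Fin n)) : ℕ :=
  ∑ i : Fin v, (Finset.univ.filter (fun j : Fin n => Ctime (P i) j < Ctime S j)).card

/-- `k_y(S,P)`: number of pairs (voter `i`, task `j`) with `C_j(V_i) ≤ y` and `C_j(S) > y`. -/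
def kPen {n v : ℕ} (S : Equiv.Perm (Fin n)) (P : Fin v → Equiv.Perm (Fin n)) (y : ℕ) : ℕ :=
  ∑ i : Fin v,
    (Finset.univ.filter (fun j : Fin n => Ctime (P i) j ≤ y ∧ y < Ctime S j)).card

/-- Median completion time of task `j`: the `⌈v/2⌉`-th smallest value of the multiset
`{C_j(V_1),…,C_j(V_v)}`. -/
def medC {n v : ℕ} (P : Fin v → Equiv.Perm (Fin n)) (j : Fin n) : ℕ :=
  (((Finset.univ.val : Multiset (Fin v)).map (fun i => Ctime (P i) j)).sort (· ≤ ·)).getD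
    ((v + 1) / 2 - 1) 0

/-- An EMD schedule: tasks are ordered by (strictly) increasing median completion times. -/
def IsEMD {n v : ℕ} (P : Fin v → Equiv.Perm (Fin n)) (S : Equiv.Perm (Fin n)) : Prop :=
  ∀ a b : Fin n, medC P a < medC P b → Ctime S a < Ctime S b

/-- Kendall-Tau distance between two schedules: the number of unordered pairs of tasks that
the two schedules order differently (each such pair is counted exactly once below). -/
def kendall {n : ℕ} (S V : Equiv.Perm (Fin n)) : ℕ :=
  (Finset.univ.filter
    (fun p : Fin n × Fin n => Ctime S p.1 < Ctime S p.2 ∧ Ctime V p.2 < Ctime V p.1)).card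

/-- Total Kendall-Tau distance from a schedule to the profile. -/
def kendallProfile {n v : ℕ} (S : Equiv.Perm (Fin n)) (P : Fin v → Equiv.Perm (Fin n)) : ℕ :=
  ∑ i : Fin v, kendall S (P i)

/-- Binary criterion cost `B(S,P)` for interval preferences given by release dates `r` and
due dates `d`. -/
def binCost {n v : ℕ} (r d : Fin v → Fin n → ℕ) (S : Equiv.Perm (Fin n)) : ℕ :=
  ∑ i : Fin v,
    (Finset.univ.filter (fun j : Fin n => d i j < Ctime S j ∨ Ctime S j ≤ r i j)).card

/-- Distance criterion cost `D(S,P)` for interval preferences: for each task,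
`C_j(S) − d_j(V_i)` if late, `r_j(V_i) − (C_j(S) − 1)` if early, `0` otherwise
(truncated subtraction makes exactly one of the two summands nonzero). -/
def distCost {n v : ℕ} (r d : Fin v → Fin n → ℕ) (S : Equiv.Perm (Fin n)) : ℕ :=
  ∑ i : Fin v, ∑ j : Fin n, ((Ctime S j - d i j) + (r i j + 1 - Ctime S j))


lemma sorted_countP_ge (l : List ℕ) (hs : l.Pairwise (· ≤ ·)) (y : ℕ) :
    ∀ k, k < l.length → l.getD k 0 ≤ y → k + 1 ≤ l.countP (fun x => x ≤ y) := by
  induction l with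
  | nil => intro k hk _; simp at hk
  | cons a t ih =>
    intro k hk h
    rw [List.pairwise_cons] at hs
    cases k with
    | zero =>
      simp only [List.getD_cons_zero] at h
      simp [List.countP_cons, h]
    | succ k =>
      simp only [List.getD_cons_succ] at h
      have hk' : k < t.length := by simpa using hk
      have := ih hs.2 k hk' h
      have hmem : t.getD k 0 ∈ t := by
        rw [List.getD_eq_getElem t 0 hk']; exact List.getElem_mem _
      have ha : a ≤ y := le_trans (hs.1 _ hmem) h
      simp [List.countP_cons, ha]
      omega

lemma sorted_countP_le (l : List ℕ) (hs : l.Pairwise (· ≤ ·)) (y : ℕ) :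
    ∀ k, y < l.getD k 0 → l.countP (fun x => x ≤ y) ≤ k := by
  induction l with
  | nil => intro k h; simp
  | cons a t ih =>
    intro k h
    rw [List.pairwise_cons] at hs
    cases k with
    | zero =>
      simp only [List.getD_cons_zero] at h
      have : ∀ x ∈ a :: t, ¬ (x ≤ y) := by
        intro x hx
        rcases List.mem_cons.1 hx with rfl | hx
        · omega
        · have := hs.1 x hx; omega
      rw [List.countP_eq_zero.2 (by intro x hx; simpa using this x hx)]
    | succ k =>
      simp only [List.getD_cons_succ] at h
      have := ih hs.2 k h
      simp only [List.countP_cons]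
      split <;> omega

lemma card_val_lt {n y : ℕ} (hy : y ≤ n) :
    (univ.filter fun j : Fin n => (j : ℕ) < y).card = y := by
  have h : (univ.filter fun j : Fin n => (j : ℕ) < y).card = (Finset.range y).card := by
    refine Finset.card_bij (fun j _ => (j : ℕ)) ?_ ?_ ?_
    · intro a ha; simp only [mem_filter] at ha; simpa using ha.2
    · intro a ha b hb h; exact Fin.val_injective h
    · intro b hb
      simp only [Finset.mem_range] at hb
      exact ⟨⟨b, lt_of_lt_of_le hb hy⟩, by simp [hb], rfl⟩
  rw [h, Finset.card_range]

lemma card_ctime_le {n y : ℕ} (σ : Equiv.Perm (Fin n)) (hy : y ≤ n) :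
    (univ.filter fun j : Fin n => Ctime σ j ≤ y).card = y := by
  have h : (univ.filter fun j : Fin n => Ctime σ j ≤ y)
      = (univ.filter fun j : Fin n => (j : ℕ) < y).map ⟨σ.symm, σ.symm.injective⟩ := by
    ext a
    simp only [mem_filter, mem_univ, true_and, Finset.mem_map, Function.Embedding.coeFn_mk]
    constructor
    · intro ha
      exact ⟨σ a, by unfold Ctime at ha; omega, by simp⟩
    · rintro ⟨b, hb, rfl⟩
      unfold Ctime; simp; omega
  rw [h, Finset.card_map, card_val_lt hy]

lemma nj_eq_countP {n v y : ℕ} (P : Fin v → Equiv.Perm (Fin n)) (j : Fin n) :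
    (univ.filter fun i : Fin v => Ctime (P i) j ≤ y).card =
    (((Finset.univ.val : Multiset (Fin v)).map (fun i => Ctime (P i) j)).sort (· ≤ ·)).countP
      (fun x => x ≤ y) := by
  set m : Multiset ℕ := (Finset.univ.val : Multiset (Fin v)).map (fun i => Ctime (P i) j) with hm
  set l : List ℕ := m.sort (· ≤ ·) with hl
  have h1 : (↑l : Multiset ℕ) = m := Multiset.sort_eq _ _
  have h2 : Multiset.countP (fun x => x ≤ y) (↑l : Multiset ℕ)
      = l.countP (fun b => decide (b ≤ y)) := Multiset.coe_countP _ _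
  rw [h1, hm, Multiset.countP_map] at h2
  rw [← h2]
  rw [← Multiset.countP_eq_card_filter]
  rw [Finset.card_def, Finset.filter_val, Multiset.countP_eq_card_filter]

-- median vs count lemmas
lemma med_le_count {n v y : ℕ} (P : Fin v → Equiv.Perm (Fin n)) (j : Fin n)
    (h : medC P j ≤ y) :
    (v + 1) / 2 ≤ (univ.filter fun i : Fin v => Ctime (P i) j ≤ y).card := by
  rcases Nat.eq_zero_or_pos v with hv | hv
  · subst hv; simp
  · set l : List ℕ :=
      ((Finset.univ.val : Multiset (Fin v)).map (fun i => Ctime (P i) j)).sort (· ≤ ·) with hl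
    have hlen : l.length = v := by
      rw [hl, Multiset.length_sort, Multiset.card_map]
      rw [← Finset.card_def, Finset.card_univ, Fintype.card_fin]
    have hsort : l.Pairwise (· ≤ ·) := Multiset.pairwise_sort _ _
    have hk : (v + 1) / 2 - 1 < l.length := by rw [hlen]; omega
    have := sorted_countP_ge l hsort y ((v + 1) / 2 - 1) hk h
    rw [nj_eq_countP]
    have h2 : (v + 1) / 2 - 1 + 1 = (v + 1) / 2 := by omega
    rw [h2] at this
    exact this

lemma count_lt_of_med_gt {n v y : ℕ} (P : Fin v → Equiv.Perm (Fin n)) (j : Fin n)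
    (h : y < medC P j) :
    (univ.filter fun i : Fin v => Ctime (P i) j ≤ y).card ≤ (v + 1) / 2 - 1 := by
  set l : List ℕ :=
    ((Finset.univ.val : Multiset (Fin v)).map (fun i => Ctime (P i) j)).sort (· ≤ ·) with hl
  have hsort : l.Pairwise (· ≤ ·) := Multiset.pairwise_sort _ _
  have := sorted_countP_le l hsort y ((v + 1) / 2 - 1) h
  rw [nj_eq_countP]
  exact this

/-- For every EMD schedule `S` and every schedule `S'`,
`k_y(S,P) ≤ 2·k_y(S',P)` for all `y ∈ {1,…,n}`. -/
theorem emd_kPen_le_two_mul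
    {n v : ℕ} (P : Fin v → Equiv.Perm (Fin n)) (S : Equiv.Perm (Fin n))
    (hS : IsEMD P S) (S' : Equiv.Perm (Fin n)) :
    ∀ y ∈ Finset.Icc 1 n, kPen S P y ≤ 2 * kPen S' P y := by
  intro y hy
  rw [Finset.mem_Icc] at hy
  set nj : Fin n → ℕ := fun j => (univ.filter fun i : Fin v => Ctime (P i) j ≤ y).card with hnj
  have hnjv : ∀ j, nj j ≤ v := by
    intro j
    calc nj j ≤ (univ : Finset (Fin v)).card := Finset.card_filter_le _ _
    _ = v := by simp
  have hk : ∀ T : Equiv.Perm (Fin n), kPen T P y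
      = ∑ j ∈ univ.filter (fun j => y < Ctime T j), nj j := by
    intro T
    unfold kPen
    simp only [Finset.card_filter]
    rw [Finset.sum_comm, Finset.sum_filter]
    refine Finset.sum_congr rfl ?_
    intro j _
    by_cases h : y < Ctime T j
    · rw [if_pos h]
      simp only [h, and_true]
      rw [hnj]
      exact (Finset.card_filter _ _).symm
    · simp [h]
  have hsum : ∑ j : Fin n, nj j = v * y := by
    have h1 : ∀ j, nj j = ∑ i : Fin v, if Ctime (P i) j ≤ y then 1 else 0 := by
      intro j; rw [hnj]; exact Finset.card_filter _ _
    calc ∑ j : Fin n, nj j = ∑ j : Fin n, ∑ i : Fin v, if Ctime (P i) j ≤ y then 1 else 0 :=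
        Finset.sum_congr rfl (fun j _ => h1 j)
      _ = ∑ i : Fin v, ∑ j : Fin n, if Ctime (P i) j ≤ y then 1 else 0 := Finset.sum_comm
      _ = ∑ i : Fin v, (univ.filter fun j : Fin n => Ctime (P i) j ≤ y).card := by
          refine Finset.sum_congr rfl ?_
          intro i _; rw [Finset.card_filter]
      _ = ∑ _i : Fin v, y := Finset.sum_congr rfl (fun i _ => card_ctime_le (P i) hy.2)
      _ = v * y := by simp [mul_comm]
  have hcompl : ∀ T : Equiv.Perm (Fin n), kPen T P y
      = ∑ j ∈ univ.filter (fun j => Ctime T j ≤ y), (v - nj j) := by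
    intro T
    have hA : (univ.filter fun j : Fin n => Ctime T j ≤ y).card = y := card_ctime_le T hy.2
    have h1 : ∑ j ∈ univ.filter (fun j => Ctime T j ≤ y), (v - nj j)
        + ∑ j ∈ univ.filter (fun j => Ctime T j ≤ y), nj j = v * y := by
      rw [← Finset.sum_add_distrib]
      rw [Finset.sum_congr rfl (fun j _ => Nat.sub_add_cancel (hnjv j))]
      rw [Finset.sum_const, hA, smul_eq_mul, mul_comm]
    have h2 : kPen T P y + ∑ j ∈ univ.filter (fun j => Ctime T j ≤ y), nj j = v * y := by
      rw [hk T]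
      have heq : (univ.filter fun j : Fin n => y < Ctime T j)
          = univ.filter (fun j => ¬ Ctime T j ≤ y) := by
        ext j; simp [not_le]
      rw [heq, add_comm, Finset.sum_filter_add_sum_filter_not]
      exact hsum
    omega
  -- key bound
  have key : kPen S P y ≤ ∑ j ∈ univ.filter (fun j => Ctime S' j ≤ y), (v - nj j)
      + ∑ j ∈ univ.filter (fun j => y < Ctime S' j), nj j := by
    by_cases hcase : ∃ b : Fin n, y < Ctime S b ∧ medC P b ≤ y
    · -- Case I : some late task has median ≤ y ⇒ all early tasks have big nj
      obtain ⟨b0, hb0, hm0⟩ := hcase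
      have hA : ∀ a : Fin n, Ctime S a ≤ y → v - nj a ≤ nj a := by
        intro a ha
        have hma : ¬ medC P b0 < medC P a := by
          intro hlt
          have := hS b0 a hlt
          omega
        have h1 : (v + 1) / 2 ≤ nj a :=
          med_le_count P a (le_trans (not_lt.1 hma) hm0)
        omega
      rw [hcompl S]
      rw [← Finset.sum_filter_add_sum_filter_not (univ.filter (fun j => Ctime S j ≤ y))
        (fun j => Ctime S' j ≤ y) (fun j => v - nj j)]
      refine add_le_add ?_ ?_
      · refine Finset.sum_le_sum_of_subset ?_
        intro j hj
        simp only [Finset.mem_filter, Finset.mem_univ, true_and] at hj ⊢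
        exact hj.2
      · calc ∑ j ∈ (univ.filter (fun j => Ctime S j ≤ y)).filter (fun j => ¬ Ctime S' j ≤ y),
              (v - nj j)
            ≤ ∑ j ∈ (univ.filter (fun j => Ctime S j ≤ y)).filter (fun j => ¬ Ctime S' j ≤ y),
              nj j := by
              refine Finset.sum_le_sum ?_
              intro j hj
              simp only [Finset.mem_filter, Finset.mem_univ, true_and] at hj
              exact hA j hj.1
          _ ≤ ∑ j ∈ univ.filter (fun j => y < Ctime S' j), nj j := by
              refine Finset.sum_le_sum_of_subset ?_
              intro j hj
              simp only [Finset.mem_filter, Finset.mem_univ, true_and, not_le] at hj ⊢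
              exact hj.2
    · -- Case II : all late tasks have median > y ⇒ their nj is small
      push_neg at hcase
      have hB : ∀ b : Fin n, y < Ctime S b → nj b ≤ v - nj b := by
        intro b hb
        have h1 : nj b ≤ (v + 1) / 2 - 1 := count_lt_of_med_gt P b (hcase b hb)
        have h2 := hnjv b
        omega
      rw [hk S]
      rw [← Finset.sum_filter_add_sum_filter_not (univ.filter (fun j => y < Ctime S j))
        (fun j => Ctime S' j ≤ y) nj]
      refine add_le_add ?_ ?_
      · calc ∑ j ∈ (univ.filter (fun j => y < Ctime S j)).filter (fun j => Ctime S' j ≤ y), nj j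
            ≤ ∑ j ∈ (univ.filter (fun j => y < Ctime S j)).filter (fun j => Ctime S' j ≤ y),
              (v - nj j) := by
              refine Finset.sum_le_sum ?_
              intro j hj
              simp only [Finset.mem_filter, Finset.mem_univ, true_and] at hj
              exact hB j hj.1
          _ ≤ ∑ j ∈ univ.filter (fun j => Ctime S' j ≤ y), (v - nj j) := by
              refine Finset.sum_le_sum_of_subset ?_
              intro j hj
              simp only [Finset.mem_filter, Finset.mem_univ, true_and] at hj ⊢
              exact hj.2
      · refine Finset.sum_le_sum_of_subset ?_
        intro j hj
        simp only [Finset.mem_filter, Finset.mem_univ, true_and, not_le] at hj ⊢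
        exact hj.2
  refine key.trans (le_of_eq ?_)
  rw [← hcompl S', ← hk S', two_mul]
end

section
/- The EMD rule is 2-approximate for the total tardiness criterion: for every preference profile P over n unit tasks with v voters, every EMD schedule S satisfies T(S,P) ≤ 2·T(S*,P) for every schedule S*; in particular T(S,P) is at most twice the minimum total tardiness. -/
open Finset

lemma sorted_getD_le_iff (y : ℕ) : ∀ (l : List ℕ), l.Pairwise (· ≤ ·) → ∀ i, i < l.length →
    (l.getD i 0 ≤ y ↔ i < l.countP (fun x => decide (x ≤ y))) := by
  intro l
  induction l with
  | nil => intro _ i hi; simp at hi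
  | cons a t ih =>
    intro hs i hi
    rw [List.pairwise_cons] at hs
    have hzero : ¬ a ≤ y → t.countP (fun x => decide (x ≤ y)) = 0 := by
      intro hay
      rw [List.countP_eq_zero]
      intro x hx
      simp only [decide_eq_true_eq]
      intro hxy
      exact hay (le_trans (hs.1 x hx) hxy)
    rcases i with _ | i
    · simp only [List.getD_cons_zero, List.countP_cons]
      constructor
      · intro h; simp [h]
      · intro h
        by_contra hay
        rw [hzero hay] at h
        simp [hay] at h
    · simp only [List.getD_cons_succ, List.countP_cons]
      rw [ih hs.2 i (by simpa using hi)]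
      by_cases hay : a ≤ y
      · simp [hay]
      · simp [hay, hzero hay]

lemma medC_le_iff {n v : ℕ} (P : Fin v → Equiv.Perm (Fin n)) (j : Fin n) (y : ℕ) :
    medC P j ≤ y ↔ (v + 1) / 2 ≤ (univ.filter fun i : Fin v => Ctime (P i) j ≤ y).card := by
  have hw : (univ.filter fun i : Fin v => Ctime (P i) j ≤ y).card
      = Multiset.countP (fun x => x ≤ y)
          ((Finset.univ.val : Multiset (Fin v)).map (fun i => Ctime (P i) j)) := by
    rw [Multiset.countP_map]
    rfl
  rcases Nat.eq_zero_or_pos v with hv | hv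
  · subst hv
    simp [medC, Finset.univ_eq_empty]
  · set l := (((Finset.univ.val : Multiset (Fin v)).map (fun i => Ctime (P i) j)).sort (· ≤ ·))
      with hl
    have hlen : l.length = v := by
      rw [hl, Multiset.length_sort, Multiset.card_map]
      simp
    have hsort : l.Pairwise (· ≤ ·) := Multiset.pairwise_sort _ _
    have hcount : Multiset.countP (fun x => x ≤ y)
        ((Finset.univ.val : Multiset (Fin v)).map (fun i => Ctime (P i) j))
        = l.countP (fun x => decide (x ≤ y)) := by
      conv_lhs => rw [← Multiset.sort_eq (r := (· ≤ ·))
        (s := (Finset.univ.val : Multiset (Fin v)).map (fun i => Ctime (P i) j))]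
      rw [Multiset.coe_countP]
    have hi : (v + 1) / 2 - 1 < l.length := by rw [hlen]; omega
    have := sorted_getD_le_iff y l hsort ((v + 1) / 2 - 1) hi
    rw [medC]
    rw [← hl] at *
    rw [this, hw, hcount]
    omega

lemma perm_filter_card {n : ℕ} (σ : Equiv.Perm (Fin n)) (Q : ℕ → Prop) [DecidablePred Q] :
    (univ.filter fun j : Fin n => Q (σ j : ℕ)).card
      = (univ.filter fun j : Fin n => Q (j : ℕ)).card := by
  apply Finset.card_bij (fun j _ => σ j)
  · intro a ha; simp only [mem_filter, mem_univ, true_and] at *; exact ha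
  · intro a ha b hb hab; exact σ.injective hab
  · intro b hb
    refine ⟨σ.symm b, ?_, by simp⟩
    simp only [mem_filter, mem_univ, true_and] at *
    simpa using hb

lemma card_filter_val_lt {n : ℕ} (y : ℕ) (hy : y ≤ n) :
    (univ.filter fun j : Fin n => (j : ℕ) < y).card = y := by
  rw [show y = (Finset.range y).card by simp]
  apply Finset.card_bij (fun (j : Fin n) _ => (j : ℕ)) (t := Finset.range y)
  · intro a ha; simp only [mem_filter, mem_univ, true_and, mem_range, Finset.card_range] at *
    exact ha
  · intro a _ b _ hab; exact Fin.val_injective hab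
  · intro b hb
    simp only [mem_range] at hb
    exact ⟨⟨b, lt_of_lt_of_le hb hy⟩, by simp [hb], rfl⟩

lemma kPen_eq {n v : ℕ} (S : Equiv.Perm (Fin n)) (P : Fin v → Equiv.Perm (Fin n)) (y : ℕ) :
    kPen S P y = ∑ j ∈ univ.filter (fun j : Fin n => y < Ctime S j),
      (univ.filter fun i : Fin v => Ctime (P i) j ≤ y).card := by
  unfold kPen
  simp only [Finset.card_filter]
  rw [Finset.sum_comm]
  rw [Finset.sum_filter]
  apply Finset.sum_congr rfl
  intro j _
  by_cases h : y < Ctime S j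
  · simp [h]
  · simp [h]

lemma sum_w_eq {n v : ℕ} (P : Fin v → Equiv.Perm (Fin n)) (y : ℕ) (hy : y ≤ n) :
    ∑ j : Fin n, (univ.filter fun i : Fin v => Ctime (P i) j ≤ y).card = v * y := by
  have key : ∀ i : Fin v, (univ.filter fun j : Fin n => Ctime (P i) j ≤ y).card = y := by
    intro i
    have : (univ.filter fun j : Fin n => Ctime (P i) j ≤ y)
        = (univ.filter fun j : Fin n => ((P i) j : ℕ) < y) := by
      apply Finset.filter_congr; intro j _; unfold Ctime
      constructor <;> (intro h; omega)
    rw [this, perm_filter_card (P i) (fun m => m < y), card_filter_val_lt y hy]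
  calc ∑ j : Fin n, (univ.filter fun i : Fin v => Ctime (P i) j ≤ y).card
      = ∑ j : Fin n, ∑ i : Fin v, if Ctime (P i) j ≤ y then 1 else 0 := by
        simp only [Finset.card_filter]
    _ = ∑ i : Fin v, ∑ j : Fin n, if Ctime (P i) j ≤ y then 1 else 0 := Finset.sum_comm
    _ = ∑ i : Fin v, (univ.filter fun j : Fin n => Ctime (P i) j ≤ y).card := by
        simp only [Finset.card_filter]
    _ = ∑ _i : Fin v, y := by simp only [key]
    _ = v * y := by simp [Finset.card_univ, mul_comm]

lemma tardiness_eq_sum_kPen {n v : ℕ} (S : Equiv.Perm (Fin n))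
    (P : Fin v → Equiv.Perm (Fin n)) :
    totalTardiness S P = ∑ y ∈ Finset.range (n + 1), kPen S P y := by
  unfold totalTardiness kPen
  conv_rhs => rw [Finset.sum_comm]
  apply Finset.sum_congr rfl
  intro i _
  have : ∀ y, (univ.filter (fun j' : Fin n => Ctime (P i) j' ≤ y ∧ y < Ctime S j')).card
      = ∑ j' : Fin n, if Ctime (P i) j' ≤ y ∧ y < Ctime S j' then 1 else 0 :=
    fun y => Finset.card_filter _ _
  simp only [this]
  rw [Finset.sum_comm]
  have hsingle : ∀ j' : Fin n,
      (∑ y ∈ Finset.range (n+1), if Ctime (P i) j' ≤ y ∧ y < Ctime S j' then 1 else 0)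
        = Ctime S j' - Ctime (P i) j' := by
    intro j'
    rw [← Finset.card_filter]
    have : (Finset.range (n+1)).filter (fun y => Ctime (P i) j' ≤ y ∧ y < Ctime S j')
        = Finset.Ico (Ctime (P i) j') (Ctime S j') := by
      ext z
      simp only [mem_filter, mem_range, mem_Ico]
      have : Ctime S j' ≤ n := by unfold Ctime; have := (S j').isLt; omega
      omega
    rw [this, Nat.card_Ico]
  simp only [hsingle]

lemma kPen_le_two_kPen {n v : ℕ} (P : Fin v → Equiv.Perm (Fin n)) (S : Equiv.Perm (Fin n))
    (hS : IsEMD P S) (Sstar : Equiv.Perm (Fin n)) (y : ℕ) :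
    kPen S P y ≤ 2 * kPen Sstar P y := by
  by_cases hy : n ≤ y
  · have : kPen S P y = 0 := by
      unfold kPen
      apply Finset.sum_eq_zero
      intro i _
      rw [Finset.card_eq_zero, Finset.filter_eq_empty_iff]
      intro j _
      unfold Ctime
      have := (S j).isLt
      omega
    omega
  push_neg at hy
  have hyn : y ≤ n := le_of_lt hy
  set w : Fin n → ℕ := fun j => (univ.filter fun i : Fin v => Ctime (P i) j ≤ y).card with hw
  set h : ℕ := (v + 1) / 2 with hh
  have hwv : ∀ j, w j ≤ v := by
    intro j
    calc w j ≤ (univ : Finset (Fin v)).card := Finset.card_filter_le _ _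
      _ = v := by simp
  have hvh : v ≤ 2 * h := by omega
  have hmed : ∀ j, medC P j ≤ y ↔ h ≤ w j := fun j => medC_le_iff P j y
  set A : Finset (Fin n) := univ.filter (fun j : Fin n => y < Ctime S j) with hA
  set Ast : Finset (Fin n) := univ.filter (fun j : Fin n => y < Ctime Sstar j) with hAst
  set W : Finset (Fin n) := univ.filter (fun j : Fin n => h ≤ w j) with hW
  rw [kPen_eq S P y, kPen_eq Sstar P y]
  rw [← hw, ← hA, ← hAst]
  by_cases hc : ∀ j, w j < h → y < Ctime S j
  -- Case 2: every low-support task is late in S, i.e. Wᶜ ⊆ A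
  · set B : Finset (Fin n) := univ \ W with hB
    have hBmem : ∀ j, j ∈ B ↔ w j < h := by
      intro j; rw [hB, hW]; simp [Finset.mem_sdiff]
    have hABW : A \ W = B := by
      ext j
      simp only [Finset.mem_sdiff, hBmem j]
      rw [hA, hW]; simp only [mem_filter, mem_univ, true_and]
      constructor
      · rintro ⟨_, hj⟩; omega
      · intro hj; exact ⟨hc j hj, by omega⟩
    have hAstB : Ast \ W = B ∩ Ast := by
      ext j
      simp only [Finset.mem_sdiff, Finset.mem_inter, hBmem j]
      rw [hW]; simp only [mem_filter, mem_univ, true_and]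
      constructor
      · rintro ⟨hj, hj2⟩; exact ⟨by omega, hj⟩
      · rintro ⟨hj, hj2⟩; exact ⟨hj2, by omega⟩
    have e1 := Finset.sum_inter_add_sum_sdiff A W w
    have e2 := Finset.sum_inter_add_sum_sdiff B Ast w
    have e3 := Finset.sum_inter_add_sum_sdiff Ast W w
    have c1 := Finset.card_inter_add_card_sdiff A W
    have c2 := Finset.card_inter_add_card_sdiff B Ast
    have c3 := Finset.card_inter_add_card_sdiff Ast W
    have cAA : A.card = Ast.card := by
      rw [hA, hAst]
      show (univ.filter fun j : Fin n => y < (S j : ℕ) + 1).card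
        = (univ.filter fun j : Fin n => y < (Sstar j : ℕ) + 1).card
      rw [perm_filter_card S (fun m => y < m + 1), perm_filter_card Sstar (fun m => y < m + 1)]
    have b1 : ∑ j ∈ A ∩ W, w j ≤ (A ∩ W).card * v := by
      have := Finset.sum_le_card_nsmul (A ∩ W) w v (fun j _ => hwv j)
      simpa using this
    have b2 : ∑ j ∈ B \ Ast, w j ≤ (B \ Ast).card * h := by
      have := Finset.sum_le_card_nsmul (B \ Ast) w h (fun j hj => by
        have : j ∈ B := Finset.mem_sdiff.mp hj |>.1
        have := (hBmem j).mp this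
        omega)
      simpa using this
    have b3 : (Ast ∩ W).card * h ≤ ∑ j ∈ Ast ∩ W, w j := by
      have := Finset.card_nsmul_le_sum (Ast ∩ W) w h (fun j hj => by
        have : j ∈ W := Finset.mem_inter.mp hj |>.2
        rw [hW] at this; simp only [mem_filter, mem_univ, true_and] at this
        exact this)
      simpa using this
    -- card equation: (Ast∩W).card = (A∩W).card + (B\Ast).card
    have hcardB : (A \ W).card = B.card := by rw [hABW]
    have hcardAstB : (Ast \ W).card = (B ∩ Ast).card := by rw [hAstB]
    have ckey : (Ast ∩ W).card = (A ∩ W).card + (B \ Ast).card := by omega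
    -- sums via partition
    have sA : ∑ j ∈ A, w j = ∑ j ∈ A ∩ W, w j + (∑ j ∈ B ∩ Ast, w j + ∑ j ∈ B \ Ast, w j) := by
      rw [e2, ← e1, hABW]
    have sAstW : ∑ j ∈ Ast \ W, w j = ∑ j ∈ B ∩ Ast, w j := by
      rw [hAstB, Finset.inter_comm]
    have sAst : ∑ j ∈ Ast, w j = ∑ j ∈ Ast ∩ W, w j + ∑ j ∈ B ∩ Ast, w j := by
      rw [← e3, sAstW]
    rw [sA, sAst]
    have mul1 : (A ∩ W).card * v ≤ 2 * ((A ∩ W).card * h) := by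
      calc (A ∩ W).card * v ≤ (A ∩ W).card * (2 * h) := Nat.mul_le_mul_left _ hvh
        _ = 2 * ((A ∩ W).card * h) := by ring
    have expand : (Ast ∩ W).card * h = (A ∩ W).card * h + (B \ Ast).card * h := by
      rw [ckey]; ring
    have key : ∀ (saw sba sbd kah dbh sasw : ℕ), saw ≤ 2 * kah → sbd ≤ dbh →
        kah + dbh ≤ sasw → saw + (sba + sbd) ≤ 2 * (sasw + sba) := by
      intros; omega
    exact key _ _ _ _ _ _ (b1.trans mul1) b2 (by rw [← expand]; exact b3)
  -- Case 1: W ⊆ E (all high-support tasks early in S)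
  · push_neg at hc
    obtain ⟨j0, hj0w, hj0⟩ := hc
    have hWE : ∀ j, h ≤ w j → Ctime S j ≤ y := by
      intro j hj
      have hmj : medC P j ≤ y := (hmed j).mpr hj
      have hmj0 : ¬ medC P j0 ≤ y := by
        intro hcon
        exact absurd ((hmed j0).mp hcon) (by omega)
      have : Ctime S j < Ctime S j0 := hS j j0 (by omega)
      omega
    set E : Finset (Fin n) := univ.filter (fun j : Fin n => ¬ y < Ctime S j) with hE
    set Est : Finset (Fin n) := univ.filter (fun j : Fin n => ¬ y < Ctime Sstar j) with hEst
    have sumU : ∑ j : Fin n, w j = v * y := by rw [hw]; exact sum_w_eq P y hyn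
    have eqA : ∑ j ∈ A, w j + ∑ j ∈ E, w j = v * y := by
      rw [hA, hE, ← sumU]
      exact Finset.sum_filter_add_sum_filter_not univ _ w
    have eqAst : ∑ j ∈ Ast, w j + ∑ j ∈ Est, w j = v * y := by
      rw [hAst, hEst, ← sumU]
      exact Finset.sum_filter_add_sum_filter_not univ _ w
    have cardEst : Est.card = y := by
      rw [hEst]
      have : (univ.filter (fun j : Fin n => ¬ y < Ctime Sstar j))
          = (univ.filter (fun j : Fin n => ((Sstar j : ℕ)) < y)) := by
        apply Finset.filter_congr
        intro j _
        unfold Ctime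
        constructor <;> (intro hx; omega)
      rw [this, perm_filter_card Sstar (fun m => m < y), card_filter_val_lt y hyn]
    have e4 := Finset.sum_inter_add_sum_sdiff Est W w
    have c4 := Finset.card_inter_add_card_sdiff Est W
    have i1 : ∑ j ∈ Est ∩ W, w j ≤ ∑ j ∈ E, w j := by
      apply Finset.sum_le_sum_of_subset
      intro j hj
      have hjW : j ∈ W := (Finset.mem_inter.mp hj).2
      rw [hW] at hjW; simp only [mem_filter, mem_univ, true_and] at hjW
      rw [hE]; simp only [mem_filter, mem_univ, true_and]
      have := hWE j hjW
      omega
    have i2 : ∑ j ∈ Est ∩ W, w j ≤ (Est ∩ W).card * v := by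
      have := Finset.sum_le_card_nsmul (Est ∩ W) w v (fun j _ => hwv j)
      simpa using this
    have i3 : 2 * ∑ j ∈ Est \ W, w j ≤ (Est \ W).card * v := by
      rw [Finset.mul_sum]
      have := Finset.sum_le_card_nsmul (Est \ W) (fun j => 2 * w j) v (fun j hj => by
        have hjW : j ∉ W := (Finset.mem_sdiff.mp hj).2
        rw [hW] at hjW; simp only [mem_filter, mem_univ, true_and] at hjW
        show 2 * w j ≤ v
        omega)
      simpa using this
    have prods : (Est ∩ W).card * v + (Est \ W).card * v = v * y := by
      rw [← add_mul, c4, cardEst, mul_comm]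
    have key : ∀ (sa se sas ses x1 x2 p1 p2 t : ℕ), sa + se = t → sas + ses = t →
        x1 + x2 = ses → x1 ≤ se → x1 ≤ p1 → 2 * x2 ≤ p2 → p1 + p2 = t → sa ≤ 2 * sas := by
      intros; omega
    exact key _ _ _ _ _ _ _ _ _ eqA eqAst e4 i1 i2 i3 prods

/-- EMD is 2-approximate for total tardiness. -/
theorem emd_two_approx_tardiness
    {n v : ℕ} (P : Fin v → Equiv.Perm (Fin n)) (S : Equiv.Perm (Fin n))
    (hS : IsEMD P S) :
    ∀ Sstar : Equiv.Perm (Fin n), totalTardiness S P ≤ 2 * totalTardiness Sstar P := by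
  intro Sstar
  rw [tardiness_eq_sum_kPen S P, tardiness_eq_sum_kPen Sstar P, Finset.mul_sum]
  exact Finset.sum_le_sum fun y _ => kPen_le_two_kPen P S hS Sstar y
end

section
/- The EMD rule is 4-approximate for the minimization of the total Kendall-Tau distance to the preference profile: for every preference profile P over n unit tasks with v voters, every EMD schedule S satisfies δ(S,P) ≤ 4·δ(R,P) for every schedule R. -/
open Finset

lemma sorted_getD_le_iff_s6 (t : ℕ) : ∀ (l : List ℕ), l.Pairwise (· ≤ ·) → ∀ k, k < l.length →
    (l.getD k 0 ≤ t ↔ k < Multiset.countP (· ≤ t) (↑l : Multiset ℕ)) := by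
  intro l
  induction l with
  | nil => intro _ k hk; simp at hk
  | cons a l ih =>
    intro hs k hk
    rw [List.pairwise_cons] at hs
    have hcons : ((↑(a :: l) : Multiset ℕ)) = a ::ₘ (↑l : Multiset ℕ) := rfl
    rw [hcons, Multiset.countP_cons]
    match k with
    | 0 =>
      simp only [List.getD_cons_zero]
      constructor
      · intro h; simp [h]
      · intro h
        by_contra hat
        have h0 : Multiset.countP (· ≤ t) (↑l : Multiset ℕ) = 0 := by
          rw [Multiset.countP_eq_zero]
          intro x hx
          have := hs.1 x (by exact_mod_cast hx)
          omega
        rw [h0, if_neg hat] at h; simp at h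
    | k + 1 =>
      simp only [List.getD_cons_succ]
      have hk' : k < l.length := by simpa using hk
      rw [ih hs.2 k hk']
      by_cases hat : a ≤ t
      · simp [hat]
      · have h0 : Multiset.countP (· ≤ t) (↑l : Multiset ℕ) = 0 := by
          rw [Multiset.countP_eq_zero]
          intro x hx
          have := hs.1 x (by exact_mod_cast hx)
          omega
        simp [hat, h0]

lemma med_le_iff {n v : ℕ} (P : Fin v → Equiv.Perm (Fin n)) (j : Fin n) (t : ℕ) :
    medC P j ≤ t ↔ (v+1)/2 ≤ (univ.filter fun i => Ctime (P i) j ≤ t).card := by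
  set m : Multiset ℕ := ((Finset.univ.val : Multiset (Fin v)).map (fun i => Ctime (P i) j)) with hm
  have hcard : Multiset.card m = v := by
    rw [hm, Multiset.card_map]; simp
  have hcount : Multiset.countP (· ≤ t) m = (univ.filter fun i => Ctime (P i) j ≤ t).card := by
    rw [hm, Multiset.countP_map]
    rfl
  rcases Nat.eq_zero_or_pos v with hv | hv
  · subst hv
    have : m = 0 := by
      rw [← Multiset.card_eq_zero, hcard]
    have hnil : (m.sort (· ≤ ·)) = [] := by
      rw [this]; simp
    unfold medC
    rw [← hm, hnil]
    simp
  · have hlen : (m.sort (· ≤ ·)).length = v := by rw [Multiset.length_sort, hcard]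
    have hk : (v+1)/2 - 1 < v := by omega
    have := sorted_getD_le_iff_s6 t (m.sort (· ≤ ·)) (Multiset.pairwise_sort _ _)
      ((v+1)/2 - 1) (by rw [hlen]; exact hk)
    unfold medC
    rw [← hm, this, Multiset.sort_eq, hcount]
    omega

lemma card_filter_apply_perm {n : ℕ} (σ : Equiv.Perm (Fin n)) (p : Fin n → Prop) [DecidablePred p] :
    (univ.filter fun j => p (σ j)).card = (univ.filter p).card := by
  apply Finset.card_bij (fun j _ => σ j)
  · intro a ha; simp at ha ⊢; exact ha
  · intro a ha b hb hab; exact σ.injective hab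
  · intro b hb; refine ⟨σ.symm b, ?_, by simp⟩
    simp at hb ⊢; simpa using hb

lemma card_filter_coe_lt {n : ℕ} (c : ℕ) (hc : c ≤ n) :
    (univ.filter fun w : Fin n => (w : ℕ) < c).card = c := by
  have h2 : (univ.filter fun w : Fin n => (w : ℕ) < c).card = (Finset.range c).card := by
    apply Finset.card_bij' (fun (w : Fin n) _ => (w : ℕ))
      (fun (m : ℕ) (hm : m ∈ Finset.range c) => (⟨m, lt_of_lt_of_le (Finset.mem_range.1 hm) hc⟩ : Fin n))
    all_goals intro a ha
    all_goals simp_all [Finset.mem_range]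
    all_goals exact Finset.mem_range.1 ha
  rw [h2, Finset.card_range]

lemma card_filter_perm_lt {n : ℕ} (σ : Equiv.Perm (Fin n)) (c : ℕ) (hc : c ≤ n) :
    (univ.filter fun j : Fin n => (σ j : ℕ) < c).card = c := by
  rw [card_filter_apply_perm σ (fun w => (w : ℕ) < c), card_filter_coe_lt c hc]

lemma card_filter_perm_le {n : ℕ} (σ : Equiv.Perm (Fin n)) (y : ℕ) (hy : y < n) :
    (univ.filter fun j : Fin n => (σ j : ℕ) ≤ y).card = y + 1 := by
  rw [← card_filter_perm_lt σ (y+1) (by omega)]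
  apply Finset.card_bij (fun a _ => a) <;> simp [Nat.lt_succ_iff]

lemma key_layer {α : Type*} [Fintype α] [DecidableEq α] (c : α → ℕ) (v h Y : ℕ)
    (hv2h : v ≤ 2 * h) (h2hv : 2 * h ≤ v + 1)
    (A R B : Finset α)
    (hAcard : A.card = Y) (hRcard : R.card = Y)
    (hsum : ∑ j, c j = v * Y)
    (hcv : ∀ j, c j ≤ v)
    (hB1 : ∀ j ∈ B, h ≤ c j) (hB2 : ∀ j ∉ B, c j < h)
    (hAB : A ⊆ B ∨ B ⊆ A) :
    ∑ j ∈ univ \ A, c j ≤ 2 * ∑ j ∈ univ \ R, c j := by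
  have hidA : ∑ j ∈ univ \ A, c j + ∑ j ∈ A, c j = v * Y := by
    rw [Finset.sum_sdiff (Finset.subset_univ A)]; exact hsum
  have hidR : ∑ j ∈ univ \ R, c j + ∑ j ∈ R, c j = v * Y := by
    rw [Finset.sum_sdiff (Finset.subset_univ R)]; exact hsum
  rcases hAB with hAB | hBA
  · -- A ⊆ B
    set t := (A \ R).card with ht
    have htc : (R \ A).card = t := Finset.card_sdiff_comm (hRcard.trans hAcard.symm)
    have hp : h * t ≤ ∑ j ∈ A \ R, c j := by
      calc h * t = (A \ R).card * h := by rw [ht]; ring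
      _ ≤ ∑ j ∈ A \ R, c j := Finset.card_nsmul_le_sum _ _ _
        (fun j hj => hB1 j (hAB (Finset.mem_sdiff.1 hj).1))
    have hq : ∑ j ∈ R \ A, c j ≤ 2 * h * t := by
      calc ∑ j ∈ R \ A, c j ≤ (R \ A).card * v := Finset.sum_le_card_nsmul _ _ _ (fun j _ => hcv j)
      _ = t * v := by rw [htc]
      _ ≤ t * (2 * h) := Nat.mul_le_mul_left t hv2h
      _ = 2 * h * t := by ring
    have hq2 : 2 * h * t = 2 * (h * t) := by ring
    have hsplitA : ∑ j ∈ A, c j = ∑ j ∈ A ∩ R, c j + ∑ j ∈ A \ R, c j :=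
      (Finset.sum_inter_add_sum_sdiff A R c).symm
    have hsplitR : ∑ j ∈ R, c j = ∑ j ∈ A ∩ R, c j + ∑ j ∈ R \ A, c j := by
      rw [Finset.inter_comm]
      exact (Finset.sum_inter_add_sum_sdiff R A c).symm
    have hpr : ∑ j ∈ A \ R, c j ≤ ∑ j ∈ univ \ R, c j :=
      Finset.sum_le_sum_of_subset (fun j hj => by
        simp only [Finset.mem_sdiff, Finset.mem_univ, true_and] at hj ⊢
        exact hj.2)
    omega
  · -- B ⊆ A
    set u := (R \ B).card with hu
    have hw : ∑ j ∈ R \ B, c j + u ≤ u * h := by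
      have : ∑ j ∈ R \ B, (c j + 1) ≤ ∑ _j ∈ R \ B, h :=
        Finset.sum_le_sum (fun j hj => hB2 j (Finset.mem_sdiff.1 hj).2)
      simpa [Finset.sum_add_distrib, Finset.sum_const, Nat.smul_one_eq_cast, mul_comm] using this
    have hq' : ∑ j ∈ R \ A, c j ≤ ∑ j ∈ R \ B, c j :=
      Finset.sum_le_sum_of_subset (Finset.sdiff_subset_sdiff (le_refl R) hBA)
    have hRB : ∑ j ∈ R ∩ B, c j ≤ (Y - u) * v := by
      have hc : (R ∩ B).card = Y - u := by
        have := Finset.card_inter_add_card_sdiff R B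
        omega
      calc ∑ j ∈ R ∩ B, c j ≤ (R ∩ B).card * v := Finset.sum_le_card_nsmul _ _ _ (fun j _ => hcv j)
      _ = (Y - u) * v := by rw [hc]
    have hsplitR : ∑ j ∈ R, c j = ∑ j ∈ R ∩ B, c j + ∑ j ∈ R \ B, c j :=
      (Finset.sum_inter_add_sum_sdiff R B c).symm
    have huY : u ≤ Y := by
      rw [hu, ← hRcard]; exact Finset.card_le_card (Finset.sdiff_subset)
    have hYuv : (Y - u) * v + u * v = Y * v := by
      rw [← Nat.add_mul]; congr 1; omega
    have hu2h : u * (2 * h) ≤ u * (v + 1) := Nat.mul_le_mul_left u h2hv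
    -- decompose ∑_{univ\A}
    have hdec : ∑ j ∈ univ \ A, c j = ∑ j ∈ (univ \ A) ∩ R, c j + ∑ j ∈ (univ \ A) \ R, c j :=
      (Finset.sum_inter_add_sum_sdiff _ R c).symm
    have hinter : (univ \ A) ∩ R = R \ A := by
      ext x; simp [Finset.mem_sdiff, Finset.mem_inter, and_comm]
    have hsub2 : ∑ j ∈ (univ \ A) \ R, c j ≤ ∑ j ∈ univ \ R, c j :=
      Finset.sum_le_sum_of_subset (fun j hj => by
        simp only [Finset.mem_sdiff, Finset.mem_univ, true_and] at hj ⊢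
        exact hj.2)
    rw [hinter] at hdec
    -- name everything and finish linearly
    have e1 : u * (v + 1) = u * v + u := by ring
    have hm : v * Y = Y * v := by ring
    -- from hw : w + u ≤ u*h  → 2w + 2u ≤ u*(2h) ≤ u*(v+1) = u*v + u → 2w + u ≤ u*v
    have e2 : 2 * (∑ j ∈ R \ B, c j) + u ≤ u * v := by
      have : 2 * (∑ j ∈ R \ B, c j + u) ≤ 2 * (u * h) := Nat.mul_le_mul_left 2 hw
      have h3 : 2 * (u * h) = u * (2 * h) := by ring
      omega
    omega

lemma tard_le {n v : ℕ} (P : Fin v → Equiv.Perm (Fin n)) (S R : Equiv.Perm (Fin n))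
    (hS : IsEMD P S) :
    ∑ i : Fin v, ∑ j : Fin n, ((S j : ℕ) - (P i j : ℕ)) ≤
      2 * ∑ i : Fin v, ∑ j : Fin n, ((R j : ℕ) - (P i j : ℕ)) := by
  have hrep : ∀ (Q : Equiv.Perm (Fin n)) (i : Fin v) (j : Fin n),
      (Q j : ℕ) - (P i j : ℕ) =
        ∑ y ∈ Finset.range n, if (P i j : ℕ) ≤ y ∧ y < (Q j : ℕ) then 1 else 0 := by
    intro Q i j
    rw [← Finset.card_filter]
    have : ((Finset.range n).filter fun y => (P i j : ℕ) ≤ y ∧ y < (Q j : ℕ)) =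
        Finset.Ico (P i j : ℕ) (Q j : ℕ) := by
      ext z
      simp only [Finset.mem_filter, Finset.mem_range, Finset.mem_Ico]
      have := (Q j).isLt
      omega
    rw [this, Nat.card_Ico]
  have hswap : ∀ (Q : Equiv.Perm (Fin n)),
      ∑ i : Fin v, ∑ j : Fin n, ((Q j : ℕ) - (P i j : ℕ)) =
      ∑ y ∈ Finset.range n, ∑ i : Fin v, ∑ j : Fin n,
        (if (P i j : ℕ) ≤ y ∧ y < (Q j : ℕ) then 1 else 0) := by
    intro Q
    simp_rw [hrep Q]
    rw [show (∑ i : Fin v, ∑ j : Fin n, ∑ y ∈ Finset.range n,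
        (if (P i j : ℕ) ≤ y ∧ y < (Q j : ℕ) then 1 else 0)) =
        ∑ i : Fin v, ∑ y ∈ Finset.range n, ∑ j : Fin n,
        (if (P i j : ℕ) ≤ y ∧ y < (Q j : ℕ) then 1 else 0) from
      Finset.sum_congr rfl (fun i _ => Finset.sum_comm)]
    exact Finset.sum_comm
  rw [hswap S, hswap R, Finset.mul_sum]
  apply Finset.sum_le_sum
  intro y hy
  have hyn : y < n := Finset.mem_range.1 hy
  set c : Fin n → ℕ := fun j => (univ.filter fun i : Fin v => (P i j : ℕ) ≤ y).card with hc
  have hinner : ∀ (Q : Equiv.Perm (Fin n)),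
      ∑ i : Fin v, ∑ j : Fin n, (if (P i j : ℕ) ≤ y ∧ y < (Q j : ℕ) then 1 else 0) =
      ∑ j ∈ univ \ (univ.filter fun j : Fin n => (Q j : ℕ) ≤ y), c j := by
    intro Q
    rw [Finset.sum_comm]
    have hset : univ \ (univ.filter fun j : Fin n => (Q j : ℕ) ≤ y) =
        univ.filter (fun j : Fin n => y < (Q j : ℕ)) := by
      ext x; simp only [Finset.mem_sdiff, Finset.mem_filter, Finset.mem_univ, true_and]
      omega
    rw [hset, Finset.sum_filter]
    apply Finset.sum_congr rfl
    intro j _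
    rw [hc]
    simp only []
    by_cases hq : y < (Q j : ℕ)
    · rw [if_pos hq, Finset.card_filter]
      apply Finset.sum_congr rfl
      intro i _
      simp [hq]
    · rw [if_neg hq]
      apply Finset.sum_eq_zero
      intro i _
      simp [hq]
  rw [hinner S, hinner R]
  apply key_layer c v ((v+1)/2) (y+1) (by omega) (by omega)
    _ _ (univ.filter fun j : Fin n => medC P j ≤ y + 1)
  · exact card_filter_perm_le S y hyn
  · exact card_filter_perm_le R y hyn
  · -- total sum
    have : ∀ j : Fin n, c j = ∑ i : Fin v, (if (P i j : ℕ) ≤ y then 1 else 0) := by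
      intro j; rw [hc]; exact Finset.card_filter _ _
    simp_rw [this]
    rw [Finset.sum_comm]
    have : ∀ i : Fin v, ∑ j : Fin n, (if (P i j : ℕ) ≤ y then 1 else 0) = y + 1 := by
      intro i
      rw [← Finset.card_filter]
      exact card_filter_perm_le (P i) y hyn
    simp_rw [this]
    simp [mul_comm]
  · intro j
    rw [hc]
    calc (univ.filter fun i : Fin v => (P i j : ℕ) ≤ y).card ≤ (univ : Finset (Fin v)).card :=
          Finset.card_filter_le _ _
    _ = v := by simp
  · intro j hj
    rw [Finset.mem_filter] at hj
    have h1 := (med_le_iff P j (y+1)).1 hj.2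
    have heq : (univ.filter fun i : Fin v => (P i j : ℕ) ≤ y) =
        (univ.filter fun i : Fin v => Ctime (P i) j ≤ y + 1) := by
      ext i; simp only [Finset.mem_filter, Finset.mem_univ, true_and, Ctime]; simp
    show (v+1)/2 ≤ (univ.filter fun i : Fin v => (P i j : ℕ) ≤ y).card
    rw [heq]; exact h1
  · intro j hj
    rw [Finset.mem_filter, not_and] at hj
    have hj' := hj (Finset.mem_univ j)
    rw [med_le_iff P j (y+1)] at hj'
    have heq : (univ.filter fun i : Fin v => (P i j : ℕ) ≤ y) =
        (univ.filter fun i : Fin v => Ctime (P i) j ≤ y + 1) := by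
      ext i; simp only [Finset.mem_filter, Finset.mem_univ, true_and, Ctime]; simp
    show (univ.filter fun i : Fin v => (P i j : ℕ) ≤ y).card < (v+1)/2
    rw [heq]
    omega
  · -- A ⊆ B ∨ B ⊆ A
    by_cases hBA : (univ.filter fun j : Fin n => medC P j ≤ y + 1) ⊆
        (univ.filter fun j : Fin n => (S j : ℕ) ≤ y)
    · right; exact hBA
    · left
      rw [Finset.not_subset] at hBA
      obtain ⟨k, hkB, hkA⟩ := hBA
      rw [Finset.mem_filter] at hkB
      intro j hj
      rw [Finset.mem_filter] at hj ⊢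
      refine ⟨Finset.mem_univ j, ?_⟩
      have hmed : ¬ (medC P k < medC P j) := by
        intro hlt
        have := hS k j hlt
        simp only [Ctime] at this
        simp only [Finset.mem_filter, Finset.mem_univ, true_and, not_le] at hkA
        omega
      have := hkB.2
      omega

lemma tard_le_kendall {n : ℕ} (σ τ : Equiv.Perm (Fin n)) :
    ∑ j : Fin n, ((σ j : ℕ) - (τ j : ℕ)) ≤ kendall σ τ := by
  have hk : kendall σ τ = ∑ j : Fin n,
      (univ.filter fun k : Fin n => Ctime σ k < Ctime σ j ∧ Ctime τ j < Ctime τ k).card := by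
    unfold kendall
    rw [Finset.card_filter, Fintype.sum_prod_type, Finset.sum_comm]
    apply Finset.sum_congr rfl
    intro j _
    rw [Finset.card_filter]
  rw [hk]
  apply Finset.sum_le_sum
  intro j _
  set T := univ.filter fun k : Fin n => Ctime σ k < Ctime σ j ∧ Ctime τ j < Ctime τ k with hT
  set X := univ.filter fun k : Fin n => (σ k : ℕ) < (σ j : ℕ) with hX
  set Z := univ.filter fun k : Fin n => (τ k : ℕ) ≤ (τ j : ℕ) with hZ
  have hXsub : X ⊆ T ∪ (Z.erase j) := by
    intro k hk
    rw [hX, Finset.mem_filter] at hk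
    by_cases ht : (τ j : ℕ) < (τ k : ℕ)
    · apply Finset.mem_union_left
      rw [hT, Finset.mem_filter]
      refine ⟨Finset.mem_univ k, ?_, ?_⟩ <;> simp only [Ctime] <;> omega
    · apply Finset.mem_union_right
      rw [Finset.mem_erase, hZ, Finset.mem_filter]
      have hkj : k ≠ j := by
        intro h; rw [h] at hk; omega
      exact ⟨hkj, Finset.mem_univ k, by omega⟩
  have hXcard : X.card = (σ j : ℕ) := card_filter_perm_lt σ (σ j : ℕ) (le_of_lt (σ j).isLt)
  have hZcard : (Z.erase j).card = (τ j : ℕ) := by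
    have hjZ : j ∈ Z := by rw [hZ, Finset.mem_filter]; exact ⟨Finset.mem_univ j, le_refl _⟩
    rw [Finset.card_erase_of_mem hjZ, hZ, card_filter_perm_le τ (τ j : ℕ) (τ j).isLt]; omega
  have := (Finset.card_le_card hXsub).trans (Finset.card_union_le _ _)
  omega

lemma card_filter_coe_le {n : ℕ} (y : ℕ) (hy : y < n) :
    (univ.filter fun w : Fin n => (w : ℕ) ≤ y).card = y + 1 := by
  have h := card_filter_coe_lt (n := n) (y+1) (by omega)
  rw [← h]
  apply Finset.card_bij (fun a _ => a) <;> simp [Nat.lt_succ_iff]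

lemma card_filter_coe_ioc {n : ℕ} (a b : ℕ) (hb : b < n) :
    (univ.filter fun w : Fin n => a < (w : ℕ) ∧ (w : ℕ) ≤ b).card = b - a := by
  rcases le_or_gt a b with hab | hab
  · have hsub : (univ.filter fun w : Fin n => (w : ℕ) ≤ a) ⊆
        (univ.filter fun w : Fin n => (w : ℕ) ≤ b) := by
      intro w hw; simp only [Finset.mem_filter, Finset.mem_univ, true_and] at hw ⊢; omega
    have hdiff : (univ.filter fun w : Fin n => a < (w : ℕ) ∧ (w : ℕ) ≤ b) =
        (univ.filter fun w : Fin n => (w : ℕ) ≤ b) \ (univ.filter fun w : Fin n => (w : ℕ) ≤ a) := by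
      ext w; simp only [Finset.mem_filter, Finset.mem_sdiff, Finset.mem_univ, true_and]; omega
    rw [hdiff, Finset.card_sdiff_of_subset hsub, card_filter_coe_le b hb, card_filter_coe_le a (by omega)]
    omega
  · have : (univ.filter fun w : Fin n => a < (w : ℕ) ∧ (w : ℕ) ≤ b) = ∅ := by
      rw [Finset.filter_eq_empty_iff]; intro w _; omega
    rw [this]; simp; omega

lemma Fdrop {n : ℕ} (π : Equiv.Perm (Fin n)) (i : ℕ) (j0 eF : Fin n)
    (hj0 : (j0 : ℕ) ≤ i) (heF : (eF : ℕ) = i + 1) (hπj0 : π j0 = eF)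
    (hx : (π eF : ℕ) ≤ i)
    (mc : ℕ) (hmc1 : mc ≤ i - (j0 : ℕ)) (hmc2 : mc ≤ i - (π eF : ℕ)) :
    ∑ j : Fin n, Nat.dist ((π * Equiv.swap j0 eF) j : ℕ) (j : ℕ) + (2 * mc + 2) ≤
      ∑ j : Fin n, Nat.dist (π j : ℕ) (j : ℕ) := by
  have hne : j0 ≠ eF := by intro h; rw [h] at hj0; omega
  set π' := π * Equiv.swap j0 eF with hπ'
  have hπ'j0 : π' j0 = π eF := by
    rw [hπ', Equiv.Perm.mul_apply, Equiv.swap_apply_left]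
  have hπ'e : π' eF = eF := by
    rw [hπ', Equiv.Perm.mul_apply, Equiv.swap_apply_right, hπj0]
  have hπ'm : ∀ m : Fin n, m ≠ j0 → m ≠ eF → π' m = π m := by
    intro m h1 h2
    rw [hπ', Equiv.Perm.mul_apply, Equiv.swap_apply_of_ne_of_ne h1 h2]
  have hmem : eF ∈ univ.erase j0 := by
    rw [Finset.mem_erase]; exact ⟨hne.symm, Finset.mem_univ eF⟩
  have hdecomp : ∀ g : Fin n → ℕ, ∑ j : Fin n, g j =
      g j0 + (g eF + ∑ j ∈ (univ.erase j0).erase eF, g j) := by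
    intro g
    rw [Finset.add_sum_erase _ g hmem, Finset.add_sum_erase _ g (Finset.mem_univ j0)]
  rw [hdecomp (fun j => Nat.dist (π' j : ℕ) (j : ℕ)), hdecomp (fun j => Nat.dist (π j : ℕ) (j : ℕ))]
  have htail : ∑ j ∈ (univ.erase j0).erase eF, Nat.dist (π' j : ℕ) (j : ℕ) =
      ∑ j ∈ (univ.erase j0).erase eF, Nat.dist (π j : ℕ) (j : ℕ) := by
    apply Finset.sum_congr rfl
    intro m hm
    rw [Finset.mem_erase, Finset.mem_erase] at hm
    rw [hπ'm m hm.2.1 hm.1]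
  beta_reduce
  rw [htail, hπ'j0, hπ'e, hπj0]
  simp only [Nat.dist]
  omega

def Uv {n : ℕ} (σ : Equiv.Perm (Fin n)) : Finset (Fin n × Fin n) :=
  univ.filter (fun p : Fin n × Fin n => (σ p.1 : ℕ) < (σ p.2 : ℕ) ∧ (p.2 : ℕ) < (p.1 : ℕ))

lemma mem_Uv {n : ℕ} (σ : Equiv.Perm (Fin n)) (p : Fin n × Fin n) :
    p ∈ Uv σ ↔ ((σ p.1 : ℕ) < (σ p.2 : ℕ) ∧ (p.2 : ℕ) < (p.1 : ℕ)) := by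
  unfold Uv; simp [Finset.mem_filter]

lemma kendall_one_eq {n : ℕ} (σ : Equiv.Perm (Fin n)) : kendall σ 1 = (Uv σ).card := by
  unfold kendall Uv
  congr 1
  apply Finset.filter_congr
  intro p _
  simp only [Ctime, Equiv.Perm.one_apply]
  omega

lemma Kdrop {n : ℕ} (π : Equiv.Perm (Fin n)) (i : ℕ) (j0 eF : Fin n)
    (hj0 : (j0 : ℕ) ≤ i) (heF : (eF : ℕ) = i + 1) (hπj0 : π j0 = eF)
    (hcross : ∀ k : Fin n, (k : ℕ) ≤ i + 1 → (π k : ℕ) ≤ i + 1) :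
    kendall π 1 ≤ kendall (π * Equiv.swap j0 eF) 1 +
      (2 * (univ.filter (fun m : Fin n =>
          (j0 : ℕ) < (m : ℕ) ∧ (m : ℕ) < i + 1 ∧ (π eF : ℕ) < (π m : ℕ))).card + 1) := by
  set s : Equiv.Perm (Fin n) := Equiv.swap j0 eF with hs
  set π' := π * s with hπ'
  set Mset := univ.filter (fun m : Fin n =>
      (j0 : ℕ) < (m : ℕ) ∧ (m : ℕ) < i + 1 ∧ (π eF : ℕ) < (π m : ℕ)) with hM
  have hne : j0 ≠ eF := by intro h; rw [h] at hj0; omega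
  have happ : ∀ a : Fin n, π' a = π (s a) := fun a => rfl
  have hss : ∀ a : Fin n, s (s a) = a := fun a => Equiv.swap_apply_self j0 eF a
  have hsj0 : s j0 = eF := Equiv.swap_apply_left j0 eF
  have hseF : s eF = j0 := Equiv.swap_apply_right j0 eF
  have hsm : ∀ m : Fin n, m ≠ j0 → m ≠ eF → s m = m :=
    fun m h1 h2 => Equiv.swap_apply_of_ne_of_ne h1 h2
  have hxle : (π eF : ℕ) ≤ i := by
    have h1 := hcross eF (by omega)
    have h2 : π eF ≠ eF := by
      intro h; exact hne (π.injective (h.trans hπj0.symm)).symm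
    have h3 : (π eF : ℕ) ≠ i + 1 := by
      rw [← heF]; intro hh; exact h2 (Fin.ext hh)
    omega
  set Resid := (Uv π).filter (fun p : Fin n × Fin n =>
      p ∉ Uv π' ∧ (s p.1, s p.2) ∉ Uv π') with hR
  have hRsub : Resid ⊆ Uv π := Finset.filter_subset _ _
  -- Step 2 : injection
  have hstep2 : ((Uv π) \ Resid).card ≤ (Uv π').card := by
    apply Finset.card_le_card_of_injOn
      (fun p => if (s p.1, s p.2) ∈ Uv π' then (s p.1, s p.2) else p)
    · intro p hp
      rw [Finset.mem_coe, Finset.mem_sdiff] at hp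
      beta_reduce; rw [Finset.mem_coe]
      by_cases hgood : (s p.1, s p.2) ∈ Uv π'
      · rw [if_pos hgood]; exact hgood
      · rw [if_neg hgood]
        rcases hp with ⟨hpU, hpR⟩
        rw [hR, Finset.mem_filter] at hpR
        push_neg at hpR
        by_contra hbad
        exact hgood (hpR hpU hbad)
    · intro p hp q hq hpq
      rw [Finset.mem_coe, Finset.mem_sdiff] at hp hq
      simp only at hpq
      by_cases h1 : (s p.1, s p.2) ∈ Uv π' <;> by_cases h2 : (s q.1, s q.2) ∈ Uv π'
      · rw [if_pos h1, if_pos h2] at hpq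
        have e1 : s p.1 = s q.1 := congrArg Prod.fst hpq
        have e2 : s p.2 = s q.2 := congrArg Prod.snd hpq
        exact Prod.ext (s.injective e1) (s.injective e2)
      · rw [if_pos h1, if_neg h2] at hpq
        exfalso
        apply h2
        have hq1 : s q.1 = p.1 := by rw [← hpq]; exact hss p.1
        have hq2 : s q.2 = p.2 := by rw [← hpq]; exact hss p.2
        rw [hq1, hq2, mem_Uv]
        have hqU := hq.1
        rw [mem_Uv] at hqU
        have hpU := hp.1
        rw [mem_Uv] at hpU
        constructor
        · have e1 : (π' p.1 : ℕ) = (π q.1 : ℕ) := by rw [happ, ← hpq]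
          have e2 : (π' p.2 : ℕ) = (π q.2 : ℕ) := by rw [happ, ← hpq]
          rw [e1, e2]; exact hqU.1
        · exact hpU.2
      · rw [if_neg h1, if_pos h2] at hpq
        exfalso
        apply h1
        have hp1 : s p.1 = q.1 := by rw [hpq]; exact hss q.1
        have hp2 : s p.2 = q.2 := by rw [hpq]; exact hss q.2
        rw [hp1, hp2, mem_Uv]
        have hqU := hq.1
        rw [mem_Uv] at hqU
        have hpU := hp.1
        rw [mem_Uv] at hpU
        constructor
        · have e1 : (π' q.1 : ℕ) = (π p.1 : ℕ) := by rw [happ, hpq]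
          have e2 : (π' q.2 : ℕ) = (π p.2 : ℕ) := by rw [happ, hpq]
          rw [e1, e2]; exact hpU.1
        · exact hqU.2
      · rw [if_neg h1, if_neg h2] at hpq; exact hpq
  -- Step 3 : Resid is small
  have hstep3 : Resid.card ≤ 2 * Mset.card + 1 := by
    have hsub : Resid ⊆ (({((eF : Fin n), j0)} : Finset (Fin n × Fin n)) ∪
        Mset.image (fun m => (m, j0))) ∪ Mset.image (fun m => ((eF : Fin n), m)) := by
      intro p hp
      rw [hR, Finset.mem_filter] at hp
      obtain ⟨hpU, hpB, hpC⟩ := hp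
      rw [mem_Uv] at hpU
      obtain ⟨hA1, hA2⟩ := hpU
      rw [mem_Uv] at hpB hpC
      push_neg at hpB hpC
      have hB : (π (s p.2) : ℕ) ≤ (π (s p.1) : ℕ) := by
        by_contra hcon
        push_neg at hcon
        have : (π' p.1 : ℕ) < (π' p.2 : ℕ) := by rw [happ, happ]; exact hcon
        have := hpB this
        omega
      have hC : ((s p.1 : Fin n) : ℕ) ≤ ((s p.2 : Fin n) : ℕ) := by
        apply hpC
        show (π' (s p.1) : ℕ) < (π' (s p.2) : ℕ)
        rw [happ, happ, hss, hss]
        exact hA1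
      by_cases h1j : p.1 = j0
      · exfalso
        have h2j : p.2 ≠ j0 := by
          intro h; rw [h1j, h] at hA2; omega
        have h2e : p.2 ≠ eF := by
          intro h
          rw [h1j, h] at hA2
          rw [heF] at hA2
          omega
        rw [h1j, hsj0, hsm p.2 h2j h2e] at hC
        rw [h1j] at hA2
        omega
      by_cases h1e : p.1 = eF
      · by_cases h2j : p.2 = j0
        · have : p = ((eF : Fin n), j0) := Prod.ext h1e h2j
          rw [this]
          exact Finset.mem_union_left _ (Finset.mem_union_left _ (Finset.mem_singleton_self _))
        · have h2e : p.2 ≠ eF := by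
            intro h; rw [h1e, h] at hA2; omega
          rw [h1e, hseF, hsm p.2 h2j h2e] at hC
          have hmid : p.2 ∈ Mset := by
            rw [hM, Finset.mem_filter]
            refine ⟨Finset.mem_univ _, ?_, ?_, ?_⟩
            · rcases Nat.lt_or_ge (j0 : ℕ) (p.2 : ℕ) with h | h
              · exact h
              · exfalso
                have : (j0 : ℕ) = (p.2 : ℕ) := le_antisymm hC h
                exact h2j (Fin.ext this.symm)
            · rw [h1e, heF] at hA2; exact hA2
            · rw [h1e] at hA1; exact hA1
          apply Finset.mem_union_right
          rw [Finset.mem_image]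
          exact ⟨p.2, hmid, Prod.ext_iff.mpr ⟨h1e.symm, rfl⟩⟩
      · -- p.1 ∉ {j0, eF}
        by_cases h2j : p.2 = j0
        · rw [hsm p.1 h1j h1e, h2j, hsj0] at hC
          have hlt : (p.1 : ℕ) < i + 1 := by
            rw [heF] at hC
            rcases Nat.lt_or_ge (p.1 : ℕ) (i+1) with h | h
            · exact h
            · exfalso
              have : (p.1 : ℕ) = i + 1 := by omega
              exact h1e (Fin.ext (by rw [this, heF]))
          have hxlt : (π eF : ℕ) < (π p.1 : ℕ) := by
            rw [h2j, hsj0, hsm p.1 h1j h1e] at hB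
            rcases Nat.lt_or_ge (π eF : ℕ) (π p.1 : ℕ) with h | h
            · exact h
            · exfalso
              have : (π eF : ℕ) = (π p.1 : ℕ) := le_antisymm hB h
              exact h1e (π.injective (Fin.ext this)).symm
          have hmid : p.1 ∈ Mset := by
            rw [hM, Finset.mem_filter]
            refine ⟨Finset.mem_univ _, ?_, hlt, hxlt⟩
            rw [h2j] at hA2; exact hA2
          apply Finset.mem_union_left
          apply Finset.mem_union_right
          rw [Finset.mem_image]
          exact ⟨p.1, hmid, Prod.ext_iff.mpr ⟨rfl, h2j.symm⟩⟩
        · by_cases h2e : p.2 = eF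
          · exfalso
            rw [hsm p.1 h1j h1e, h2e, hseF] at hC
            rw [h2e, heF] at hA2
            omega
          · exfalso
            rw [hsm p.1 h1j h1e, hsm p.2 h2j h2e] at hC
            omega
    have hcard1 := Finset.card_le_card hsub
    have hu1 := Finset.card_union_le (({((eF : Fin n), j0)} : Finset (Fin n × Fin n)) ∪
      Mset.image (fun m => (m, j0))) (Mset.image (fun m => ((eF : Fin n), m)))
    have hu2 := Finset.card_union_le ({((eF : Fin n), j0)} : Finset (Fin n × Fin n))
      (Mset.image (fun m => (m, j0)))
    have hi1 := Finset.card_image_le (s := Mset) (f := fun m => (m, j0))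
    have hi2 := Finset.card_image_le (s := Mset) (f := fun m => ((eF : Fin n), m))
    have hsing : ({((eF : Fin n), j0)} : Finset (Fin n × Fin n)).card = 1 :=
      Finset.card_singleton _
    omega
  -- assemble
  rw [kendall_one_eq, kendall_one_eq]
  have hcount := Finset.card_sdiff_add_card_eq_card hRsub
  omega

lemma kendall_one_le_dist {n : ℕ} (π : Equiv.Perm (Fin n)) :
    kendall π 1 ≤ ∑ j : Fin n, Nat.dist (π j : ℕ) (j : ℕ) := by
  suffices H : ∀ (F : ℕ) (π : Equiv.Perm (Fin n)),
      (∑ j : Fin n, Nat.dist (π j : ℕ) (j : ℕ)) = F →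
      kendall π 1 ≤ F by exact H _ π rfl
  intro F
  induction F using Nat.strong_induction_on with
  | _ F IH =>
    intro π hF
    by_cases hid : π = 1
    · subst hid
      rw [kendall_one_eq]
      have : Uv (1 : Equiv.Perm (Fin n)) = ∅ := by
        rw [Finset.eq_empty_iff_forall_notMem]
        intro p hp
        rw [mem_Uv] at hp
        simp only [Equiv.Perm.one_apply] at hp
        omega
      rw [this]
      simp
    · -- get a crossing threshold
      have hexists : ∃ j : Fin n, π j ≠ j := by
        by_contra h
        push_neg at h
        exact hid (Equiv.ext h)
      set Tset := (Finset.range n).filter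
        (fun t => ∃ j : Fin n, (j : ℕ) ≤ t ∧ t < (π j : ℕ)) with hT
      have hTne : Tset.Nonempty := by
        obtain ⟨j, hj⟩ := hexists
        have hvne : (π j : ℕ) ≠ (j : ℕ) := fun h => hj (Fin.ext h)
        rcases Nat.lt_or_ge (j : ℕ) (π j : ℕ) with hlt | hge
        · exact ⟨(j : ℕ), by
            rw [hT, Finset.mem_filter]
            exact ⟨Finset.mem_range.2 j.isLt, ⟨j, le_refl _, hlt⟩⟩⟩
        · have hlt' : (π j : ℕ) < (j : ℕ) := by omega
          have hj1 : 1 ≤ (j : ℕ) := by omega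
          by_contra hcon
          rw [Finset.not_nonempty_iff_eq_empty, Finset.eq_empty_iff_forall_notMem] at hcon
          have hnone : ∀ k : Fin n, ¬((k : ℕ) ≤ (j : ℕ) - 1 ∧ (j : ℕ) - 1 < (π k : ℕ)) := by
            intro k hk
            exact hcon ((j : ℕ) - 1) (by
              rw [hT, Finset.mem_filter]
              exact ⟨Finset.mem_range.2 (by omega), ⟨k, hk.1, hk.2⟩⟩)
          -- pigeonhole contradiction
          have hmaps : ∀ k ∈ (univ.filter fun k : Fin n => (k : ℕ) ≤ (j : ℕ)),
              π k ∈ (univ.filter fun w : Fin n => (w : ℕ) < (j : ℕ)) := by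
            intro k hk
            rw [Finset.mem_filter] at hk ⊢
            refine ⟨Finset.mem_univ _, ?_⟩
            rcases Nat.lt_or_ge (k : ℕ) (j : ℕ) with h | h
            · have := hnone k
              omega
            · have : (k : ℕ) = (j : ℕ) := by omega
              have : k = j := Fin.ext this
              rw [this]
              exact hlt'
          have hcard := Finset.card_le_card_of_injOn (fun k => π k) hmaps
            (fun a _ b _ hab => π.injective hab)
          rw [card_filter_coe_le (j : ℕ) j.isLt, card_filter_coe_lt (j : ℕ) (le_of_lt j.isLt)]
            at hcard
          omega
      set i := Tset.max' hTne with hi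
      have himem : i ∈ (Finset.range n).filter
          (fun t => ∃ j : Fin n, (j : ℕ) ≤ t ∧ t < (π j : ℕ)) := by
        rw [← hT]; exact Tset.max'_mem hTne
      obtain ⟨hirange, j', hj'1, hj'2⟩ := Finset.mem_filter.1 himem
      rw [Finset.mem_range] at hirange
      have hcross : ∀ k : Fin n, (k : ℕ) ≤ i + 1 → (π k : ℕ) ≤ i + 1 := by
        intro k hk
        by_contra hc
        push_neg at hc
        have hmem : (i + 1) ∈ Tset := by
          rw [hT, Finset.mem_filter]
          refine ⟨Finset.mem_range.2 (by have := (π k).isLt; omega), ⟨k, hk, hc⟩⟩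
        have := Tset.le_max' _ hmem
        rw [← hi] at this
        omega
      have hπj'val : (π j' : ℕ) = i + 1 := by
        have := hcross j' (by omega)
        omega
      set j0 := j' with hj0def
      set eF := π j0 with heFdef
      have heF : (eF : ℕ) = i + 1 := hπj'val
      have hxle : (π eF : ℕ) ≤ i := by
        have h1 := hcross eF (by omega)
        have h2 : π eF ≠ eF := by
          intro h
          have : eF = j0 := π.injective (h.trans rfl)
          rw [heFdef] at this
          have hv : (eF : ℕ) = (j0 : ℕ) := congrArg Fin.val this
          omega
        have h3 : (π eF : ℕ) ≠ i + 1 := by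
          rw [← heF]; intro hh; exact h2 (Fin.ext hh)
        omega
      set Mset := univ.filter (fun m : Fin n =>
          (j0 : ℕ) < (m : ℕ) ∧ (m : ℕ) < i + 1 ∧ (π eF : ℕ) < (π m : ℕ)) with hM
      have hin : i < n := by omega
      have hmc1 : Mset.card ≤ i - (j0 : ℕ) := by
        have hsub : Mset ⊆ univ.filter (fun w : Fin n => (j0 : ℕ) < (w : ℕ) ∧ (w : ℕ) ≤ i) := by
          intro m hm
          rw [hM, Finset.mem_filter] at hm
          rw [Finset.mem_filter]
          exact ⟨Finset.mem_univ _, hm.2.1, by omega⟩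
        have := Finset.card_le_card hsub
        rw [card_filter_coe_ioc (j0 : ℕ) i hin] at this
        exact this
      have hmc2 : Mset.card ≤ i - (π eF : ℕ) := by
        have hmaps : ∀ m ∈ Mset,
            π m ∈ univ.filter (fun w : Fin n => (π eF : ℕ) < (w : ℕ) ∧ (w : ℕ) ≤ i) := by
          intro m hm
          rw [hM, Finset.mem_filter] at hm
          rw [Finset.mem_filter]
          refine ⟨Finset.mem_univ _, hm.2.2.2, ?_⟩
          have h1 := hcross m (by omega)
          have h2 : (π m : ℕ) ≠ i + 1 := by
            intro hh
            have : π m = π j0 := Fin.ext (by rw [hh, ← heF])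
            have := π.injective this
            rw [this] at hm
            omega
          omega
        have := Finset.card_le_card_of_injOn (fun m => π m) hmaps
          (fun a _ b _ hab => π.injective hab)
        rw [card_filter_coe_ioc (π eF : ℕ) i hin] at this
        exact this
      have hj0i : (j0 : ℕ) ≤ i := hj'1
      have hFdrop := Fdrop π i j0 eF hj0i heF rfl hxle Mset.card hmc1 hmc2
      have hKdrop := Kdrop π i j0 eF hj0i heF rfl hcross
      rw [← hM] at hKdrop
      set F' := ∑ j : Fin n, Nat.dist ((π * Equiv.swap j0 eF) j : ℕ) (j : ℕ) with hF'
      have hlt : F' < F := by omega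
      have hIH := IH F' hlt (π * Equiv.swap j0 eF) rfl
      omega

lemma kendall_conj {n : ℕ} (σ τ : Equiv.Perm (Fin n)) :
    kendall σ τ = kendall (σ * τ⁻¹) 1 := by
  rw [kendall_one_eq]
  unfold kendall
  apply Finset.card_bij (fun p _ => ((τ p.1 : Fin n), (τ p.2 : Fin n)))
  · intro p hp
    rw [Finset.mem_filter] at hp
    rw [mem_Uv]
    simp only [Equiv.Perm.mul_apply, Equiv.Perm.coe_inv, Equiv.symm_apply_apply]
    obtain ⟨-, h1, h2⟩ := hp
    simp only [Ctime] at h1 h2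
    exact ⟨by omega, by omega⟩
  · intro p hp q hq hpq
    have e1 : τ p.1 = τ q.1 := congrArg Prod.fst hpq
    have e2 : τ p.2 = τ q.2 := congrArg Prod.snd hpq
    exact Prod.ext (τ.injective e1) (τ.injective e2)
  · intro q hq
    refine ⟨(τ⁻¹ q.1, τ⁻¹ q.2), ?_, ?_⟩
    · rw [Finset.mem_filter]
      rw [mem_Uv] at hq
      simp only [Equiv.Perm.mul_apply] at hq
      refine ⟨Finset.mem_univ _, ?_, ?_⟩ <;>
        simp only [Ctime, Equiv.Perm.coe_inv, Equiv.apply_symm_apply] at hq ⊢ <;> omega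
    · simp only [Equiv.Perm.coe_inv, Equiv.apply_symm_apply]

lemma sum_sub_comm {n : ℕ} (σ τ : Equiv.Perm (Fin n)) :
    ∑ j : Fin n, ((σ j : ℕ) - (τ j : ℕ)) = ∑ j : Fin n, ((τ j : ℕ) - (σ j : ℕ)) := by
  have hσ : ∑ j : Fin n, (σ j : ℕ) = ∑ j : Fin n, (j : ℕ) :=
    Equiv.sum_comp σ (fun x : Fin n => (x : ℕ))
  have hτ : ∑ j : Fin n, (τ j : ℕ) = ∑ j : Fin n, (j : ℕ) :=
    Equiv.sum_comp τ (fun x : Fin n => (x : ℕ))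
  have h1 : ∑ j : Fin n, (((σ j : ℕ) - (τ j : ℕ)) + min (σ j : ℕ) (τ j : ℕ)) =
      ∑ j : Fin n, (σ j : ℕ) := by
    apply Finset.sum_congr rfl; intro j _; omega
  have h2 : ∑ j : Fin n, (((τ j : ℕ) - (σ j : ℕ)) + min (σ j : ℕ) (τ j : ℕ)) =
      ∑ j : Fin n, (τ j : ℕ) := by
    apply Finset.sum_congr rfl; intro j _; omega
  rw [Finset.sum_add_distrib] at h1 h2
  omega

lemma kendall_le_two_tard {n : ℕ} (σ τ : Equiv.Perm (Fin n)) :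
    kendall σ τ ≤ 2 * ∑ j : Fin n, ((σ j : ℕ) - (τ j : ℕ)) := by
  rw [kendall_conj]
  have h1 := kendall_one_le_dist (σ * τ⁻¹)
  have h2 : ∑ j : Fin n, Nat.dist ((σ * τ⁻¹) j : ℕ) (j : ℕ) =
      ∑ j : Fin n, Nat.dist (σ j : ℕ) (τ j : ℕ) := by
    rw [← Equiv.sum_comp τ (fun k : Fin n => Nat.dist ((σ * τ⁻¹) k : ℕ) (k : ℕ))]
    apply Finset.sum_congr rfl
    intro j _
    simp only [Equiv.Perm.mul_apply, Equiv.Perm.coe_inv, Equiv.symm_apply_apply]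
  have h3 : ∑ j : Fin n, Nat.dist (σ j : ℕ) (τ j : ℕ) =
      ∑ j : Fin n, (((σ j : ℕ) - (τ j : ℕ)) + ((τ j : ℕ) - (σ j : ℕ))) := by
    apply Finset.sum_congr rfl; intro j _; rfl
  rw [Finset.sum_add_distrib] at h3
  have h4 := sum_sub_comm σ τ
  omega

/-- EMD is 4-approximate for the total Kendall-Tau distance. -/
theorem emd_four_approx_kendall
    {n v : ℕ} (P : Fin v → Equiv.Perm (Fin n)) (S : Equiv.Perm (Fin n))
    (hS : IsEMD P S) :
    ∀ R : Equiv.Perm (Fin n), kendallProfile S P ≤ 4 * kendallProfile R P := by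
  intro R
  have step1 : kendallProfile S P ≤ 2 * ∑ i : Fin v, ∑ j : Fin n, ((S j : ℕ) - (P i j : ℕ)) := by
    unfold kendallProfile
    calc ∑ i : Fin v, kendall S (P i)
        ≤ ∑ i : Fin v, 2 * ∑ j : Fin n, ((S j : ℕ) - (P i j : ℕ)) :=
          Finset.sum_le_sum (fun i _ => kendall_le_two_tard S (P i))
      _ = 2 * ∑ i : Fin v, ∑ j : Fin n, ((S j : ℕ) - (P i j : ℕ)) := by
          rw [Finset.mul_sum]
  have step2 := tard_le P S R hS
  have step3 : ∑ i : Fin v, ∑ j : Fin n, ((R j : ℕ) - (P i j : ℕ)) ≤ kendallProfile R P := by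
    unfold kendallProfile
    exact Finset.sum_le_sum (fun i _ => tard_le_kendall R (P i))
  omega
end

section
/- The EMD rule does not fulfill release date consistency: there exist n, v, a preference profile P of v preferred schedules over n unit tasks, a task j, and a time t such that C_j(V_i) ≥ t for every voter i, yet every EMD schedule S for P satisfies C_j(S) < t. (A witness is the 4-task, 3-voter profile 2≺1≺3≺4, 3≺1≺2≺4, 4≺1≺2≺3, where every voter completes task 1 at time 2 but the medians m_1 = 2, m_2 = m_3 = 3, m_4 = 4 force task 1 to complete at time 1.) -/
open Finset

def myV1 : Equiv.Perm (Fin 4) := Equiv.mk ![1,0,2,3] ![1,0,2,3] (by decide) (by decide)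
def myV2 : Equiv.Perm (Fin 4) := Equiv.mk ![1,2,0,3] ![2,0,1,3] (by decide) (by decide)
def myV3 : Equiv.Perm (Fin 4) := Equiv.mk ![1,2,3,0] ![3,0,1,2] (by decide) (by decide)

def myP : Fin 3 → Equiv.Perm (Fin 4) := ![myV1, myV2, myV3]

lemma mySort_eq {l : List ℕ} (m : Multiset ℕ) (h : m = ↑l) (hl : List.Pairwise (· ≤ ·) l) :
    m.sort (· ≤ ·) = l :=
  List.Perm.eq_of_pairwise'
    (Multiset.pairwise_sort _ _) hl
    (by rw [← Multiset.coe_eq_coe, Multiset.sort_eq, h])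

lemma medC_compute {n v : ℕ} (P : Fin v → Equiv.Perm (Fin n)) (j : Fin n) (l : List ℕ)
    (h : ((Finset.univ.val : Multiset (Fin v)).map (fun i => Ctime (P i) j)) = ↑l)
    (hl : List.Pairwise (· ≤ ·) l) : medC P j = l.getD ((v + 1) / 2 - 1) 0 := by
  unfold medC; rw [mySort_eq _ h hl]

/-- The EMD rule does not fulfill release date consistency. -/
theorem emd_not_release_date_consistent :
    ∃ (n v : ℕ) (P : Fin v → Equiv.Perm (Fin n)) (j : Fin n) (t : ℕ),
      (∀ i : Fin v, t ≤ Ctime (P i) j) ∧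
      ∀ S : Equiv.Perm (Fin n), IsEMD P S → Ctime S j < t := by
  refine ⟨4, 3, myP, 0, 2, ?_, ?_⟩
  · intro i; fin_cases i <;> decide
  · intro S hS
    have m0 : medC myP 0 = 2 := by
      rw [medC_compute myP 0 [2,2,2] (by decide) (by decide)]; rfl
    have m1 : medC myP 1 = 3 := by
      rw [medC_compute myP 1 [1,3,3] (by decide) (by decide)]; rfl
    have m2 : medC myP 2 = 3 := by
      rw [medC_compute myP 2 [1,3,4] (by decide) (by decide)]; rfl
    have m3 : medC myP 3 = 4 := by
      rw [medC_compute myP 3 [1,4,4] (by decide) (by decide)]; rfl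
    have h1 : Ctime S 0 < Ctime S 1 := hS 0 1 (by rw [m0, m1]; norm_num)
    have h2 : Ctime S 0 < Ctime S 2 := hS 0 2 (by rw [m0, m2]; norm_num)
    have h3 : Ctime S 0 < Ctime S 3 := hS 0 3 (by rw [m0, m3]; norm_num)
    have n12 : (S 1 : ℕ) ≠ (S 2 : ℕ) := Fin.val_ne_of_ne (S.injective.ne (by decide))
    have n13 : (S 1 : ℕ) ≠ (S 3 : ℕ) := Fin.val_ne_of_ne (S.injective.ne (by decide))
    have n23 : (S 2 : ℕ) ≠ (S 3 : ℕ) := Fin.val_ne_of_ne (S.injective.ne (by decide))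
    have b1 : (S 1 : ℕ) < 4 := (S 1).isLt
    have b2 : (S 2 : ℕ) < 4 := (S 2).isLt
    have b3 : (S 3 : ℕ) < 4 := (S 3).isLt
    simp only [Ctime] at *
    omega
end

section
/- The EMD rule does not fulfill deadline consistency: there exist n, v, a preference profile P of v preferred schedules over n unit tasks, a task j, and a time t such that C_j(V_i) ≤ t for every voter i, yet every EMD schedule S for P satisfies C_j(S) > t. (A witness is the 4-task, 3-voter profile 2≺3≺1≺4, 2≺4≺1≺3, 4≺3≺1≺2, where every voter completes task 1 at time 3 but the medians m_1 = 3, m_2 = 1, m_3 = m_4 = 2 force task 1 to complete at time 4.) -/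
open Finset

/-- The witness profile: three voters over four tasks. -/
def emdP : Fin 3 → Equiv.Perm (Fin 4) :=
  ![⟨![2, 0, 1, 3], ![1, 2, 0, 3], by decide, by decide⟩,
    ⟨![2, 0, 3, 1], ![1, 3, 0, 2], by decide, by decide⟩,
    ⟨![2, 3, 1, 0], ![3, 2, 0, 1], by decide, by decide⟩]

lemma sort_eq_of_sorted {l : List ℕ} {s : Multiset ℕ} (h : (l : Multiset ℕ) = s)
    (hl : l.Pairwise (· ≤ ·)) : s.sort (· ≤ ·) = l := by
  subst h
  refine List.Perm.eq_of_pairwise' (Multiset.pairwise_sort _ _) hl ?_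
  exact Multiset.coe_eq_coe.mp (Multiset.sort_eq (α := ℕ) ↑l (· ≤ ·))

lemma med0 : medC emdP 0 = 3 := by
  unfold medC
  rw [sort_eq_of_sorted (l := [3,3,3]) (by decide) (by decide)]; decide

lemma med1 : medC emdP 1 = 1 := by
  unfold medC
  rw [sort_eq_of_sorted (l := [1,1,4]) (by decide) (by decide)]; decide

lemma med2 : medC emdP 2 = 2 := by
  unfold medC
  rw [sort_eq_of_sorted (l := [2,2,4]) (by decide) (by decide)]; decide

lemma med3 : medC emdP 3 = 2 := by
  unfold medC
  rw [sort_eq_of_sorted (l := [1,2,4]) (by decide) (by decide)]; decide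

/-- The EMD rule does not fulfill deadline consistency. -/
theorem emd_not_deadline_consistent :
    ∃ (n v : ℕ) (P : Fin v → Equiv.Perm (Fin n)) (j : Fin n) (t : ℕ),
      (∀ i : Fin v, Ctime (P i) j ≤ t) ∧
      ∀ S : Equiv.Perm (Fin n), IsEMD P S → t < Ctime S j := by
  refine ⟨4, 3, emdP, 0, 3, ?_, ?_⟩
  · decide
  · intro S hS
    have h1 : Ctime S 1 < Ctime S 0 := hS 1 0 (by rw [med0, med1]; decide)
    have h2 : Ctime S 2 < Ctime S 0 := hS 2 0 (by rw [med0, med2]; decide)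
    have h3 : Ctime S 3 < Ctime S 0 := hS 3 0 (by rw [med0, med3]; decide)
    have e12 : S 1 ≠ S 2 := fun h => by simpa using S.injective h
    have e13 : S 1 ≠ S 3 := fun h => by simpa using S.injective h
    have e23 : S 2 ≠ S 3 := fun h => by simpa using S.injective h
    have n12 : (S 1 : ℕ) ≠ (S 2 : ℕ) := fun h => e12 (Fin.ext h)
    have n13 : (S 1 : ℕ) ≠ (S 3 : ℕ) := fun h => e13 (Fin.ext h)
    have n23 : (S 2 : ℕ) ≠ (S 3 : ℕ) := fun h => e23 (Fin.ext h)
    have hb : (S 0 : ℕ) < 4 := (S 0).isLt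
    simp only [Ctime] at h1 h2 h3 ⊢
    omega
end

section
/- The Binary Criterion rule fulfills temporal unanimity: let P be an interval preference profile over n unit tasks with v voters in which each voter's intervals admit a feasible schedule, and suppose there is a task j and constants r < d such that r_j(V_i) = r and d_j(V_i) = d for every voter i. Then there exists a schedule S minimizing the total binary dissatisfaction B(S,P) such that r < C_j(S) ≤ d. -/
open Finset

/-- The Binary Criterion rule fulfills temporal unanimity. -/
theorem binary_rule_temporal_unanimity
    {n v : ℕ} (r d : Fin v → Fin n → ℕ)
    (hrd : ∀ (i : Fin v) (j : Fin n), r i j < d i j)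
    (hdn : ∀ (i : Fin v) (j : Fin n), d i j ≤ n)
    (hfeas : ∀ i : Fin v, ∃ T : Equiv.Perm (Fin n),
      ∀ j : Fin n, r i j < Ctime T j ∧ Ctime T j ≤ d i j)
    (j0 : Fin n) (rr dd : ℕ) (hrrdd : rr < dd) (hddn : dd ≤ n)
    (hunan : ∀ i : Fin v, r i j0 = rr ∧ d i j0 = dd) :
    ∃ S : Equiv.Perm (Fin n),
      (∀ S' : Equiv.Perm (Fin n), binCost r d S ≤ binCost r d S') ∧
      rr < Ctime S j0 ∧ Ctime S j0 ≤ dd := by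
  classical
  obtain ⟨S, -, hS⟩ := Finset.exists_min_image (Finset.univ : Finset (Equiv.Perm (Fin n)))
    (binCost r d) ⟨1, Finset.mem_univ _⟩
  by_cases hwin : rr < Ctime S j0 ∧ Ctime S j0 ≤ dd
  · exact ⟨S, fun S' => hS S' (Finset.mem_univ _), hwin.1, hwin.2⟩
  have hn : 0 < n := j0.pos
  have hdd1 : dd - 1 < n := by omega
  set p : Fin n := ⟨dd - 1, hdd1⟩ with hp
  set k := S.symm p with hk
  have hSk : S k = p := S.apply_symm_apply p
  have hkj0 : j0 ≠ k := by
    intro h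
    apply hwin
    have : Ctime S j0 = dd := by
      rw [h]
      simp only [Ctime, hSk, hp]
      omega
    omega
  set S' := S * Equiv.swap j0 k with hS'
  have h1 : S' j0 = p := by
    simp [hS', Equiv.swap_apply_left, hSk]
  have hC1 : Ctime S' j0 = dd := by
    simp only [Ctime, h1, hp]
    omega
  have h2 : ∀ j : Fin n, j ≠ j0 → j ≠ k → Ctime S' j = Ctime S j := by
    intro j hj1 hj2
    simp [Ctime, hS', Equiv.swap_apply_of_ne_of_ne hj1 hj2]
  have hle : binCost r d S' ≤ binCost r d S := by
    unfold binCost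
    apply Finset.sum_le_sum
    intro i _
    rw [Finset.card_filter, Finset.card_filter]
    have hsub : ({j0, k} : Finset (Fin n)) ⊆ Finset.univ := Finset.subset_univ _
    rw [← Finset.sum_sdiff hsub, ← Finset.sum_sdiff hsub]
    have heq : ∀ j ∈ Finset.univ \ ({j0, k} : Finset (Fin n)),
        (if d i j < Ctime S' j ∨ Ctime S' j ≤ r i j then 1 else 0) =
        (if d i j < Ctime S j ∨ Ctime S j ≤ r i j then 1 else 0) := by
      intro j hj
      simp only [Finset.mem_sdiff, Finset.mem_insert, Finset.mem_singleton] at hj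
      rw [h2 j (fun h => hj.2 (Or.inl h)) (fun h => hj.2 (Or.inr h))]
    rw [Finset.sum_congr rfl heq]
    apply Nat.add_le_add_left
    rw [Finset.sum_pair hkj0, Finset.sum_pair hkj0]
    obtain ⟨hri, hdi⟩ := hunan i
    have hj0new : ¬(d i j0 < Ctime S' j0 ∨ Ctime S' j0 ≤ r i j0) := by
      rw [hC1, hri, hdi]; omega
    have hj0old : d i j0 < Ctime S j0 ∨ Ctime S j0 ≤ r i j0 := by
      rw [hri, hdi]; omega
    rw [if_neg hj0new, if_pos hj0old]
    have : (if d i k < Ctime S' k ∨ Ctime S' k ≤ r i k then 1 else 0) ≤ 1 := by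
      split <;> omega
    omega
  refine ⟨S', fun S'' => ?_, by omega, by omega⟩
  exact le_trans hle (hS S'' (Finset.mem_univ _))
end

section
/- The EMD rule fulfills all inferred precedence constraints: for every preference profile P of v preferred schedules over n unit tasks and all tasks a, b, if C_a(V_i) < C_b(V_i) for every voter i, then the median completion times satisfy m_a < m_b, and consequently every EMD schedule S for P satisfies C_a(S) < C_b(S). -/
open Finset

lemma sorted_countP_le_ge (l : List ℕ) (h : l.Pairwise (· ≤ ·)) (k : ℕ) (hk : k < l.length)
    (x : ℕ) (hx : l.get ⟨k, hk⟩ = x) :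
    k + 1 ≤ l.countP (fun e => e ≤ x) := by
  have hsplit := List.take_append_drop (k + 1) l
  have hlen : (l.take (k + 1)).length = k + 1 := by
    rw [List.length_take]; omega
  have hall : ∀ a ∈ l.take (k + 1), (fun e => decide (e ≤ x)) a = true := by
    intro a ha
    obtain ⟨i, hi, hgi⟩ := List.getElem_of_mem ha
    rw [List.getElem_take] at hgi
    simp only [decide_eq_true_eq]
    subst hgi
    have := h.rel_get_of_le (a := ⟨i, by omega⟩) (b := ⟨k, hk⟩)
      (by simp only [Fin.mk_le_mk]; omega)
    rw [hx] at this
    simpa using this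
  calc k + 1 = (l.take (k + 1)).countP (fun e => decide (e ≤ x)) := by
        rw [List.countP_eq_length.mpr hall, hlen]
    _ ≤ l.countP (fun e => decide (e ≤ x)) := by
        conv_rhs => rw [← hsplit]
        rw [List.countP_append]; omega

lemma sorted_countP_lt_le (l : List ℕ) (h : l.Pairwise (· ≤ ·)) (k : ℕ) (hk : k < l.length)
    (x : ℕ) (hx : l.get ⟨k, hk⟩ = x) :
    l.countP (fun e => e < x) ≤ k := by
  have hsplit := List.take_append_drop k l
  have hzero : (l.drop k).countP (fun e => decide (e < x)) = 0 := by
    rw [List.countP_eq_zero]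
    intro a ha
    obtain ⟨i, hi, hgi⟩ := List.getElem_of_mem ha
    rw [List.getElem_drop] at hgi
    simp only [decide_eq_true_eq, not_lt]
    subst hgi
    have := h.rel_get_of_le (a := ⟨k, hk⟩)
      (b := ⟨k + i, by rw [List.length_drop] at hi; omega⟩)
      (by simp only [Fin.mk_le_mk]; omega)
    rw [hx] at this
    simpa using this
  calc l.countP (fun e => decide (e < x))
      = (l.take k).countP (fun e => decide (e < x)) := by
        conv_lhs => rw [← hsplit]
        rw [List.countP_append, hzero]; omega
    _ ≤ (l.take k).length := List.countP_le_length
    _ ≤ k := by rw [List.length_take]; omega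

lemma order_stat_lt {v : ℕ} (fa fb : Fin v → ℕ) (h : ∀ i, fa i < fb i) (k : ℕ) (hk : k < v) :
    (((Finset.univ.val : Multiset (Fin v)).map fa).sort (· ≤ ·)).getD k 0 <
      (((Finset.univ.val : Multiset (Fin v)).map fb).sort (· ≤ ·)).getD k 0 := by
  set la := ((Finset.univ.val : Multiset (Fin v)).map fa).sort (· ≤ ·) with hla
  set lb := ((Finset.univ.val : Multiset (Fin v)).map fb).sort (· ≤ ·) with hlb
  have hlena : la.length = v := by simp [hla, Multiset.length_sort]
  have hlenb : lb.length = v := by simp [hlb, Multiset.length_sort]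
  have hsa : la.Pairwise (· ≤ ·) := Multiset.pairwise_sort _ _
  have hsb : lb.Pairwise (· ≤ ·) := Multiset.pairwise_sort _ _
  have hka : k < la.length := by omega
  have hkb : k < lb.length := by omega
  rw [List.getD_eq_getElem _ _ hka, List.getD_eq_getElem _ _ hkb]
  set x := la[k] with hxd
  set y := lb[k] with hyd
  have hxg : la.get ⟨k, hka⟩ = x := rfl
  have hyg : lb.get ⟨k, hkb⟩ = y := rfl
  by_contra hcon
  push_neg at hcon
  have hca : ((Finset.univ.val : Multiset (Fin v)).map fa).countP (fun e => e < x) =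
      la.countP (fun e => decide (e < x)) := by
    conv_lhs => rw [← Multiset.sort_eq ((Finset.univ.val : Multiset (Fin v)).map fa) (· ≤ ·)]
    exact Multiset.coe_countP _ _
  have hcb : ((Finset.univ.val : Multiset (Fin v)).map fb).countP (fun e => e ≤ x) =
      lb.countP (fun e => decide (e ≤ x)) := by
    conv_lhs => rw [← Multiset.sort_eq ((Finset.univ.val : Multiset (Fin v)).map fb) (· ≤ ·)]
    exact Multiset.coe_countP _ _
  have h1 : k + 1 ≤ lb.countP (fun e => decide (e ≤ x)) := by
    have h0 : k + 1 ≤ lb.countP (fun e => decide (e ≤ y)) :=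
      sorted_countP_le_ge lb hsb k hkb y hyg
    refine le_trans h0 (List.countP_mono_left ?_)
    intro e _ he
    simp only [decide_eq_true_eq] at he ⊢
    omega
  have h2 : la.countP (fun e => decide (e < x)) ≤ k :=
    sorted_countP_lt_le la hsa k hka x hxg
  have h3 : ((Finset.univ.val : Multiset (Fin v)).map fb).countP (fun e => e ≤ x) ≤
      ((Finset.univ.val : Multiset (Fin v)).map fa).countP (fun e => e < x) := by
    rw [Multiset.countP_map, Multiset.countP_map]
    apply Multiset.card_le_card
    apply Multiset.monotone_filter_right
    intro i hi
    exact lt_of_lt_of_le (h i) hi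
  omega

/-- The EMD rule fulfills all inferred precedence constraints: if every voter
schedules `a` strictly before `b`, then `m_a < m_b`, and hence every EMD schedule schedules
`a` strictly before `b`. -/
theorem emd_fulfills_inferred_precedences
    {n v : ℕ} (hv : 0 < v) (P : Fin v → Equiv.Perm (Fin n)) (a b : Fin n)
    (hab : ∀ i : Fin v, Ctime (P i) a < Ctime (P i) b) :
    medC P a < medC P b ∧
      ∀ S : Equiv.Perm (Fin n), IsEMD P S → Ctime S a < Ctime S b := by
  have hk : (v + 1) / 2 - 1 < v := by omega
  have hm : medC P a < medC P b :=
    order_stat_lt (fun i => Ctime (P i) a) (fun i => Ctime (P i) b) hab _ hk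
  exact ⟨hm, fun S hS => hS a b hm⟩
end
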